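/- arXiv:2110.10785 — 4 statements merged into one kernel-verified Lean document; each statement's English description precedes it below -/
import Mathlib

section
/- Let (p_n) and (q_n) be sequences in (0, 1/2] which tend to 0, and suppose n²·q_n → ∞. Then I-Div(𝒢(n,p_n) ‖ 𝒢(n,q_n)) → 0 as n → ∞ if and only if n²·|p_n − q_n| → 0. -/
open MeasureTheory Filter Topology

noncomputable section

instance (n : ℕ) : MeasurableSpace (SimpleGraph (Fin n)) := ⊤

/-- The law of the Erdős–Rényi random graph `𝒢(n,p)` on the vertex set `Fin n`:
each graph `G` gets probability `p^{e(G)} (1-p)^{C(n,2)-e(G)}`. -/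
def erMeasure (n : ℕ) (p : ℝ) : Measure (SimpleGraph (Fin n)) :=
  Measure.sum fun G : SimpleGraph (Fin n) =>
    (ENNReal.ofReal (p ^ G.edgeSet.ncard * (1 - p) ^ (n.choose 2 - G.edgeSet.ncard))) •
      Measure.dirac G

/-- `Pr[𝒳 ⊇ G]`: the probability that the random graph with law `P` contains `G`. -/
def inclProb {n : ℕ} (P : Measure (SimpleGraph (Fin n))) (G : SimpleGraph (Fin n)) : ℝ :=
  (P {H | G ≤ H}).toReal

/-- The inclusion divergence between the laws of two random graphs on `n` vertices. -/
def IDiv {n : ℕ} (PX PY : Measure (SimpleGraph (Fin n))) : ℝ :=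
  ⨅ A : Finset (SimpleGraph (Fin n)),
    ((⨆ G ∈ A, |inclProb PX G / inclProb PY G - 1|) +
      (PY ((↑A : Set (SimpleGraph (Fin n))))ᶜ).toReal)

set_option linter.unusedSectionVars false
set_option linter.unusedVariables false
set_option linter.deprecated false
set_option maxHeartbeats 1000000


namespace ERAux


variable {K : Type*} [Fintype K] [DecidableEq K]

lemma sum_powerset_pow (u : Finset K) (a b : ℝ) :
    ∑ s ∈ u.powerset, a ^ s.card * b ^ (u.card - s.card) = (a + b) ^ u.card := by
  induction u using Finset.induction_on with
  | empty => simp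
  | insert x u hx ih =>
    rw [Finset.sum_powerset_insert hx, Finset.card_insert_of_notMem hx]
    have h1 : ∑ s ∈ u.powerset, a ^ s.card * b ^ (u.card + 1 - s.card)
        = b * ∑ s ∈ u.powerset, a ^ s.card * b ^ (u.card - s.card) := by
      rw [Finset.mul_sum]
      refine Finset.sum_congr rfl fun s hs => ?_
      have hsu : s.card ≤ u.card := Finset.card_le_card (Finset.mem_powerset.mp hs)
      have : u.card + 1 - s.card = (u.card - s.card) + 1 := by omega
      rw [this, pow_succ]; ring
    have h2 : ∑ s ∈ u.powerset, a ^ (insert x s).card * b ^ (u.card + 1 - (insert x s).card)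
        = a * ∑ s ∈ u.powerset, a ^ s.card * b ^ (u.card - s.card) := by
      rw [Finset.mul_sum]
      refine Finset.sum_congr rfl fun s hs => ?_
      have hxs : x ∉ s := fun h => hx (Finset.mem_powerset.mp hs h)
      rw [Finset.card_insert_of_notMem hxs]
      have hsu : s.card ≤ u.card := Finset.card_le_card (Finset.mem_powerset.mp hs)
      have : u.card + 1 - (s.card + 1) = u.card - s.card := by omega
      rw [this, pow_succ]; ring
    rw [h1, h2, ih, pow_succ]; ring

lemma sum_powerset_card_pow (u : Finset K) (a : ℝ) :
    ∑ s ∈ u.powerset, (s.card : ℝ) * (a ^ s.card * (1 - a) ^ (u.card - s.card))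
      = u.card * a := by
  induction u using Finset.induction_on with
  | empty => simp
  | insert x u hx ih =>
    rw [Finset.sum_powerset_insert hx, Finset.card_insert_of_notMem hx]
    have h0 := sum_powerset_pow u a (1 - a)
    have hab : a + (1 - a) = 1 := by ring
    rw [hab, one_pow] at h0
    have h1 : ∑ s ∈ u.powerset, (s.card : ℝ) * (a ^ s.card * (1 - a) ^ (u.card + 1 - s.card))
        = (1 - a) * ∑ s ∈ u.powerset, (s.card : ℝ) * (a ^ s.card * (1 - a) ^ (u.card - s.card)) := by
      rw [Finset.mul_sum]
      refine Finset.sum_congr rfl fun s hs => ?_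
      have hsu : s.card ≤ u.card := Finset.card_le_card (Finset.mem_powerset.mp hs)
      have : u.card + 1 - s.card = (u.card - s.card) + 1 := by omega
      rw [this, pow_succ]; ring
    have h2 : ∑ s ∈ u.powerset,
          ((insert x s).card : ℝ) * (a ^ (insert x s).card * (1 - a) ^ (u.card + 1 - (insert x s).card))
        = ∑ s ∈ u.powerset,
            (a * ((s.card : ℝ) * (a ^ s.card * (1 - a) ^ (u.card - s.card)))
              + a * (a ^ s.card * (1 - a) ^ (u.card - s.card))) := by
      refine Finset.sum_congr rfl fun s hs => ?_
      have hxs : x ∉ s := fun h => hx (Finset.mem_powerset.mp hs h)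
      rw [Finset.card_insert_of_notMem hxs]
      have hsu : s.card ≤ u.card := Finset.card_le_card (Finset.mem_powerset.mp hs)
      have : u.card + 1 - (s.card + 1) = u.card - s.card := by omega
      rw [this]
      push_cast
      ring
    rw [h1, h2, Finset.sum_add_distrib, ← Finset.mul_sum, ← Finset.mul_sum, h0, ih]
    push_cast
    ring

lemma sum_powerset_card_sq_pow (u : Finset K) (a : ℝ) :
    ∑ s ∈ u.powerset, (s.card : ℝ) ^ 2 * (a ^ s.card * (1 - a) ^ (u.card - s.card))
      = u.card * a * (1 - a) + (u.card * a) ^ 2 := by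
  induction u using Finset.induction_on with
  | empty => simp
  | insert x u hx ih =>
    rw [Finset.sum_powerset_insert hx, Finset.card_insert_of_notMem hx]
    have h0 := sum_powerset_pow u a (1 - a)
    have hab : a + (1 - a) = 1 := by ring
    rw [hab, one_pow] at h0
    have hm1 := sum_powerset_card_pow u a
    have h1 : ∑ s ∈ u.powerset, (s.card : ℝ) ^ 2 * (a ^ s.card * (1 - a) ^ (u.card + 1 - s.card))
        = (1 - a) * ∑ s ∈ u.powerset, (s.card : ℝ) ^ 2 * (a ^ s.card * (1 - a) ^ (u.card - s.card)) := by
      rw [Finset.mul_sum]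
      refine Finset.sum_congr rfl fun s hs => ?_
      have hsu : s.card ≤ u.card := Finset.card_le_card (Finset.mem_powerset.mp hs)
      have : u.card + 1 - s.card = (u.card - s.card) + 1 := by omega
      rw [this, pow_succ]; ring
    have h2 : ∑ s ∈ u.powerset,
          ((insert x s).card : ℝ) ^ 2 * (a ^ (insert x s).card * (1 - a) ^ (u.card + 1 - (insert x s).card))
        = a * ((∑ s ∈ u.powerset, (s.card : ℝ) ^ 2 * (a ^ s.card * (1 - a) ^ (u.card - s.card)))
            + 2 * (u.card * a) + 1) := by
      have h2' : ∑ s ∈ u.powerset,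
            ((insert x s).card : ℝ) ^ 2 * (a ^ (insert x s).card * (1 - a) ^ (u.card + 1 - (insert x s).card))
          = ∑ s ∈ u.powerset,
              (a * ((s.card : ℝ) ^ 2 * (a ^ s.card * (1 - a) ^ (u.card - s.card)))
                + 2 * a * ((s.card : ℝ) * (a ^ s.card * (1 - a) ^ (u.card - s.card)))
                + a * (a ^ s.card * (1 - a) ^ (u.card - s.card))) := by
        refine Finset.sum_congr rfl fun s hs => ?_
        have hxs : x ∉ s := fun h => hx (Finset.mem_powerset.mp hs h)
        rw [Finset.card_insert_of_notMem hxs]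
        have hsu : s.card ≤ u.card := Finset.card_le_card (Finset.mem_powerset.mp hs)
        have : u.card + 1 - (s.card + 1) = u.card - s.card := by omega
        rw [this]
        push_cast
        ring
      rw [h2', Finset.sum_add_distrib, Finset.sum_add_distrib, ← Finset.mul_sum, ← Finset.mul_sum,
        ← Finset.mul_sum, h0, hm1]
      ring
    rw [h1, h2, ih]
    push_cast
    ring




variable {K : Type*} [Fintype K] [DecidableEq K]

lemma sum_superset (s : Finset K) (a : ℝ) :
    ∑ t ∈ Finset.univ.filter (fun t : Finset K => s ⊆ t),
      a ^ t.card * (1 - a) ^ (Fintype.card K - t.card) = a ^ s.card := by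
  have hsc : s.card ≤ Fintype.card K := by
    simpa using Finset.card_le_card (Finset.subset_univ s)
  have hc : (Finset.univ \ s).card = Fintype.card K - s.card := by
    rw [Finset.card_sdiff_of_subset (Finset.subset_univ s), Finset.card_univ]
  have h2 : ∑ r ∈ (Finset.univ \ s).powerset,
      a ^ (s.card + r.card) * (1 - a) ^ (Fintype.card K - (s.card + r.card)) = a ^ s.card := by
    have step : ∑ r ∈ (Finset.univ \ s).powerset,
        a ^ (s.card + r.card) * (1 - a) ^ (Fintype.card K - (s.card + r.card))
        = a ^ s.card * ∑ r ∈ (Finset.univ \ s).powerset,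
            a ^ r.card * (1 - a) ^ ((Finset.univ \ s).card - r.card) := by
      rw [Finset.mul_sum]
      refine Finset.sum_congr rfl fun r hr => ?_
      have hr' : r.card ≤ (Finset.univ \ s).card := Finset.card_le_card (Finset.mem_powerset.mp hr)
      have he : Fintype.card K - (s.card + r.card) = (Finset.univ \ s).card - r.card := by omega
      rw [he, pow_add]; ring
    rw [step, sum_powerset_pow]
    norm_num
  refine Eq.trans ?_ h2
  refine Finset.sum_nbij' (fun t => t \ s) (fun r => s ∪ r) ?_ ?_ ?_ ?_ ?_
  · intro t ht
    rw [Finset.mem_powerset]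
    exact Finset.sdiff_subset_sdiff (Finset.subset_univ t) le_rfl
  · intro r hr
    simp only [Finset.mem_filter, Finset.mem_univ, true_and]
    exact Finset.subset_union_left
  · intro t ht
    have hst : s ⊆ t := (Finset.mem_filter.mp ht).2
    exact Finset.union_sdiff_of_subset hst
  · intro r hr
    have hr' : r ⊆ Finset.univ \ s := Finset.mem_powerset.mp hr
    have hd : Disjoint s r := by
      refine Finset.disjoint_left.mpr fun x hx hxr => ?_
      exact (Finset.mem_sdiff.mp (hr' hxr)).2 hx
    exact Finset.union_sdiff_cancel_left hd
  · intro t ht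
    have hst : s ⊆ t := (Finset.mem_filter.mp ht).2
    have hcd : (t \ s).card = t.card - s.card := Finset.card_sdiff_of_subset hst
    have hle : s.card ≤ t.card := Finset.card_le_card hst
    have : s.card + (t \ s).card = t.card := by omega
    rw [this]




variable {K : Type*} [Fintype K] [DecidableEq K]

/-- weight of a finset -/
def wt (a : ℝ) (s : Finset K) : ℝ := a ^ s.card * (1 - a) ^ (Fintype.card K - s.card)

lemma wt_nonneg {a : ℝ} (ha : 0 ≤ a) (ha1 : a ≤ 1) (s : Finset K) : 0 ≤ wt a s :=
  mul_nonneg (pow_nonneg ha _) (pow_nonneg (by linarith) _)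

lemma sum_wt : ∀ a : ℝ, ∑ s : Finset K, wt a s = 1 := by
  intro a
  have h := sum_powerset_pow (Finset.univ : Finset K) a (1 - a)
  have : a + (1 - a) = 1 := by ring
  rw [this, one_pow] at h
  rw [← Finset.powerset_univ]
  simpa only [wt, Finset.card_univ] using h

lemma sum_card_wt : ∀ a : ℝ, ∑ s : Finset K, (s.card : ℝ) * wt a s = (Fintype.card K) * a := by
  intro a
  have h := sum_powerset_card_pow (Finset.univ : Finset K) a
  rw [← Finset.powerset_univ]
  simpa only [wt, Finset.card_univ] using h

lemma sum_card_sq_wt : ∀ a : ℝ, ∑ s : Finset K, (s.card : ℝ) ^ 2 * wt a s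
    = (Fintype.card K) * a * (1 - a) + ((Fintype.card K) * a) ^ 2 := by
  intro a
  have h := sum_powerset_card_sq_pow (Finset.univ : Finset K) a
  rw [← Finset.powerset_univ]
  simpa only [wt, Finset.card_univ] using h

lemma sum_central (a : ℝ) :
    ∑ s : Finset K, ((s.card : ℝ) - (Fintype.card K) * a) ^ 2 * wt a s
      = (Fintype.card K) * a * (1 - a) := by
  set μ : ℝ := (Fintype.card K) * a with hμ
  have e1 : ∀ s : Finset K, ((s.card : ℝ) - μ) ^ 2 * wt a s
      = (s.card : ℝ) ^ 2 * wt a s - 2 * μ * ((s.card : ℝ) * wt a s) + μ ^ 2 * wt a s :=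
    fun s => by ring
  rw [Finset.sum_congr rfl fun s _ => e1 s]
  rw [Finset.sum_add_distrib, Finset.sum_sub_distrib, ← Finset.mul_sum, ← Finset.mul_sum,
    sum_wt, sum_card_wt, sum_card_sq_wt]
  ring

lemma tail_up {a : ℝ} (ha : 0 ≤ a) (ha1 : a ≤ 1) {t : ℝ} (ht : 0 < t) :
    ∑ s ∈ Finset.univ.filter (fun s : Finset K => ¬((s.card : ℝ) ≤ t)), wt a s
      ≤ (Fintype.card K) * a / t := by
  have step1 : ∑ s ∈ Finset.univ.filter (fun s : Finset K => ¬((s.card : ℝ) ≤ t)), wt a s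
      ≤ ∑ s ∈ Finset.univ.filter (fun s : Finset K => ¬((s.card : ℝ) ≤ t)),
          ((s.card : ℝ) / t) * wt a s := by
    refine Finset.sum_le_sum fun s hs => ?_
    have hst : t < (s.card : ℝ) := lt_of_not_ge (Finset.mem_filter.mp hs).2
    have h1 : (1 : ℝ) ≤ (s.card : ℝ) / t := (one_le_div ht).mpr hst.le
    nlinarith [wt_nonneg ha ha1 s]
  have step2 : ∑ s ∈ Finset.univ.filter (fun s : Finset K => ¬((s.card : ℝ) ≤ t)),
        ((s.card : ℝ) / t) * wt a s
      ≤ ∑ s : Finset K, ((s.card : ℝ) / t) * wt a s := by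
    refine Finset.sum_le_sum_of_subset_of_nonneg (Finset.filter_subset _ _) fun s _ _ => ?_
    exact mul_nonneg (div_nonneg (Nat.cast_nonneg _) ht.le) (wt_nonneg ha ha1 s)
  have step3 : ∑ s : Finset K, ((s.card : ℝ) / t) * wt a s = (Fintype.card K) * a / t := by
    rw [← sum_card_wt a, Finset.sum_div]
    exact Finset.sum_congr rfl fun s _ => by ring
  linarith

lemma tail_low {a : ℝ} (ha : 0 ≤ a) (ha1 : a ≤ 1)
    (hN : 0 < (Fintype.card K : ℝ) * a) :
    ∑ s ∈ Finset.univ.filter (fun s : Finset K => (s.card : ℝ) < (Fintype.card K) * a / 2), wt a s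
      ≤ 4 / ((Fintype.card K) * a) := by
  set μ : ℝ := (Fintype.card K) * a with hμ
  have step1 : ∑ s ∈ Finset.univ.filter (fun s : Finset K => (s.card : ℝ) < μ / 2), wt a s
      ≤ ∑ s ∈ Finset.univ.filter (fun s : Finset K => (s.card : ℝ) < μ / 2),
          (((s.card : ℝ) - μ) ^ 2 / (μ / 2) ^ 2) * wt a s := by
    refine Finset.sum_le_sum fun s hs => ?_
    have hst : (s.card : ℝ) < μ / 2 := (Finset.mem_filter.mp hs).2
    have h1 : (μ / 2) ^ 2 ≤ ((s.card : ℝ) - μ) ^ 2 := by nlinarith [(Nat.cast_nonneg s.card : (0:ℝ) ≤ (s.card : ℝ))]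
    have h2 : (0:ℝ) < (μ / 2) ^ 2 := by positivity
    have h3 : (1 : ℝ) ≤ ((s.card : ℝ) - μ) ^ 2 / (μ / 2) ^ 2 := (one_le_div h2).mpr h1
    nlinarith [wt_nonneg ha ha1 s]
  have step2 : ∑ s ∈ Finset.univ.filter (fun s : Finset K => (s.card : ℝ) < μ / 2),
        (((s.card : ℝ) - μ) ^ 2 / (μ / 2) ^ 2) * wt a s
      ≤ ∑ s : Finset K, (((s.card : ℝ) - μ) ^ 2 / (μ / 2) ^ 2) * wt a s := by
    refine Finset.sum_le_sum_of_subset_of_nonneg (Finset.filter_subset _ _) fun s _ _ => ?_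
    have := wt_nonneg ha ha1 s
    positivity
  have step3 : ∑ s : Finset K, (((s.card : ℝ) - μ) ^ 2 / (μ / 2) ^ 2) * wt a s
      = μ * (1 - a) / (μ / 2) ^ 2 := by
    rw [← sum_central a, Finset.sum_div]
    exact Finset.sum_congr rfl fun s _ => by ring
  have step4 : μ * (1 - a) / (μ / 2) ^ 2 ≤ 4 / μ := by
    rw [div_le_div_iff₀ (by positivity) hN]
    nlinarith
  linarith


end ERAux

namespace ERAux
variable {K : Type*} [Fintype K] [DecidableEq K]

lemma sum_superset_wt (s : Finset K) (a : ℝ) :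
    ∑ t ∈ Finset.univ.filter (fun t : Finset K => s ⊆ t), wt a t = a ^ s.card := by
  simp only [wt]
  exact sum_superset s a

end ERAux

namespace ERAux


variable {n : ℕ}

abbrev ES (n : ℕ) := {e : Sym2 (Fin n) // ¬e.IsDiag}

lemma card_ES (n : ℕ) : Fintype.card (ES n) = n.choose 2 := by
  rw [Sym2.card_subtype_not_diag, Fintype.card_fin]

open scoped Classical in
def g2f (G : SimpleGraph (Fin n)) : Finset (ES n) :=
  Finset.univ.filter (fun e => e.val ∈ G.edgeSet)

def f2g (s : Finset (ES n)) : SimpleGraph (Fin n) :=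
  SimpleGraph.fromEdgeSet (Subtype.val '' (↑s : Set (ES n)))

lemma mem_g2f {G : SimpleGraph (Fin n)} {e : ES n} : e ∈ g2f G ↔ e.val ∈ G.edgeSet := by
  classical
  simp [g2f]

lemma card_g2f (G : SimpleGraph (Fin n)) : (g2f G).card = G.edgeSet.ncard := by
  classical
  have h1 : (g2f G).card = Fintype.card {e : ES n // e.val ∈ G.edgeSet} := by
    rw [Fintype.card_subtype]
    congr 1
  have e : {e : ES n // e.val ∈ G.edgeSet} ≃ G.edgeSet :=
    { toFun := fun x => ⟨x.1.1, x.2⟩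
      invFun := fun y => ⟨⟨y.1, G.not_isDiag_of_mem_edgeSet y.2⟩, y.2⟩
      left_inv := fun x => by ext; rfl
      right_inv := fun y => rfl }
  rw [h1, ← Nat.card_eq_fintype_card, Nat.card_congr e, Nat.card_coe_set_eq]

lemma g2f_subset {G H : SimpleGraph (Fin n)} : g2f G ⊆ g2f H ↔ G ≤ H := by
  constructor
  · intro h
    rw [← SimpleGraph.edgeSet_subset_edgeSet]
    intro x hx
    have hd := G.not_isDiag_of_mem_edgeSet hx
    exact mem_g2f.mp (h (mem_g2f.mpr hx : (⟨x, hd⟩ : ES n) ∈ g2f G))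
  · intro h e he
    exact mem_g2f.mpr (SimpleGraph.edgeSet_subset_edgeSet.mpr h (mem_g2f.mp he))

lemma f2g_g2f (G : SimpleGraph (Fin n)) : f2g (g2f G) = G := by
  have himg : Subtype.val '' (↑(g2f G) : Set (ES n)) = G.edgeSet := by
    ext x
    constructor
    · rintro ⟨e, he, rfl⟩
      exact mem_g2f.mp he
    · intro hx
      exact ⟨⟨x, G.not_isDiag_of_mem_edgeSet hx⟩, mem_g2f.mpr hx, rfl⟩
  rw [f2g, himg, SimpleGraph.fromEdgeSet_edgeSet]

lemma g2f_f2g (s : Finset (ES n)) : g2f (f2g s) = s := by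
  ext e
  rw [mem_g2f, f2g, SimpleGraph.edgeSet_fromEdgeSet]
  constructor
  · rintro ⟨⟨e', he', hee⟩, -⟩
    have : e' = e := Subtype.ext hee
    rwa [← this]
  · intro he
    exact ⟨⟨e, he, rfl⟩, e.2⟩

lemma sum_transfer (g : Finset (ES n) → ℝ) (Q : SimpleGraph (Fin n) → Prop) [DecidablePred Q]
    [DecidablePred fun s : Finset (ES n) => Q (f2g s)] :
    ∑ G ∈ Finset.univ.filter Q, g (g2f G)
      = ∑ s ∈ Finset.univ.filter (fun s : Finset (ES n) => Q (f2g s)), g s := by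
  refine Finset.sum_nbij' g2f f2g ?_ ?_ ?_ ?_ ?_
  · intro G hG
    simp only [Finset.mem_filter, Finset.mem_univ, true_and] at hG ⊢
    rwa [f2g_g2f]
  · intro s hs
    simp only [Finset.mem_filter, Finset.mem_univ, true_and] at hs ⊢
    exact hs
  · intro G _; exact f2g_g2f G
  · intro s _; exact g2f_f2g s
  · intro G _; rfl

lemma wt_g2f (pp : ℝ) (G : SimpleGraph (Fin n)) :
    wt pp (g2f G) = pp ^ G.edgeSet.ncard * (1 - pp) ^ (n.choose 2 - G.edgeSet.ncard) := by
  rw [wt, card_g2f, card_ES]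

lemma erMeasure_apply_toReal (pp : ℝ) (h0 : 0 ≤ pp) (h1 : pp ≤ 1)
    (S : Set (SimpleGraph (Fin n))) [DecidablePred (· ∈ S)] :
    (erMeasure n pp S).toReal
      = ∑ G ∈ Finset.univ.filter (· ∈ S),
          pp ^ G.edgeSet.ncard * (1 - pp) ^ (n.choose 2 - G.edgeSet.ncard) := by
  have hw : ∀ G : SimpleGraph (Fin n),
      0 ≤ pp ^ G.edgeSet.ncard * (1 - pp) ^ (n.choose 2 - G.edgeSet.ncard) :=
    fun G => mul_nonneg (pow_nonneg h0 _) (pow_nonneg (by linarith) _)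
  have hms : MeasurableSet S := MeasurableSpace.measurableSet_top
  rw [erMeasure, MeasureTheory.Measure.sum_apply _ hms]
  have h2 : ∀ G : SimpleGraph (Fin n),
      ((ENNReal.ofReal (pp ^ G.edgeSet.ncard * (1 - pp) ^ (n.choose 2 - G.edgeSet.ncard))) •
        Measure.dirac G) S
      = if G ∈ S then
          ENNReal.ofReal (pp ^ G.edgeSet.ncard * (1 - pp) ^ (n.choose 2 - G.edgeSet.ncard))
        else 0 := by
    intro G
    rw [MeasureTheory.Measure.smul_apply, smul_eq_mul, MeasureTheory.Measure.dirac_apply' _ hms]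
    by_cases hG : G ∈ S
    · rw [Set.indicator_of_mem hG, if_pos hG, Pi.one_apply, mul_one]
    · rw [Set.indicator_of_notMem hG, if_neg hG, mul_zero]
  rw [tsum_congr h2, tsum_fintype]
  rw [ENNReal.toReal_sum (fun G _ => by split_ifs <;> simp)]
  rw [Finset.sum_filter]
  refine Finset.sum_congr rfl fun G _ => ?_
  split_ifs with hG
  · exact ENNReal.toReal_ofReal (hw G)
  · simp

lemma inclProb_erMeasure (b : ℝ) (hb0 : 0 ≤ b) (hb1 : b ≤ 1) (G : SimpleGraph (Fin n)) :
    inclProb (erMeasure n b) G = b ^ G.edgeSet.ncard := by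
  classical
  rw [inclProb, erMeasure_apply_toReal b hb0 hb1]
  have hstep : ∑ H ∈ Finset.univ.filter (· ∈ {H : SimpleGraph (Fin n) | G ≤ H}),
        b ^ H.edgeSet.ncard * (1 - b) ^ (n.choose 2 - H.edgeSet.ncard)
      = ∑ H ∈ Finset.univ.filter (fun H => G ≤ H), wt b (g2f H) := by
    refine Finset.sum_congr ?_ fun H _ => (wt_g2f b H).symm
    apply Finset.filter_congr
    intro H _
    simp [Set.mem_setOf_eq]
  rw [hstep, sum_transfer (wt b) (fun H => G ≤ H)]
  have hfilter : (Finset.univ.filter (fun s : Finset (ES n) => G ≤ f2g s))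
      = Finset.univ.filter (fun s : Finset (ES n) => g2f G ⊆ s) := by
    apply Finset.filter_congr
    intro s _
    constructor
    · intro h
      have := g2f_subset.mpr h
      rwa [g2f_f2g] at this
    · intro h
      exact g2f_subset.mp (by rwa [g2f_f2g])
  rw [hfilter, sum_superset_wt, card_g2f]


end ERAux

namespace ERAux
variable {n : ℕ}

lemma sum_wt_graphs_univ (b : ℝ) :
    ∑ G : SimpleGraph (Fin n), wt b (g2f G) = 1 := by
  classical
  have h1 : ∑ G : SimpleGraph (Fin n), wt b (g2f G)
      = ∑ G ∈ Finset.univ.filter (fun _ : SimpleGraph (Fin n) => True), wt b (g2f G) := by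
    rw [Finset.filter_true]
  rw [h1, sum_transfer (wt b) (fun _ => True)]
  rw [Finset.filter_true]
  exact sum_wt b

lemma erMeasure_compl_toReal (b : ℝ) (h0 : 0 ≤ b) (h1 : b ≤ 1)
    (A : Finset (SimpleGraph (Fin n))) :
    (erMeasure n b ((↑A : Set (SimpleGraph (Fin n))))ᶜ).toReal
      = 1 - ∑ G ∈ A, wt b (g2f G) := by
  classical
  rw [erMeasure_apply_toReal b h0 h1]
  have h2 : Finset.univ.filter (· ∈ ((↑A : Set (SimpleGraph (Fin n))))ᶜ)
      = Finset.univ.filter (fun G => ¬(G ∈ A)) := by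
    apply Finset.filter_congr
    intro G _
    simp
  have h3 : ∑ G ∈ Finset.univ.filter (· ∈ ((↑A : Set (SimpleGraph (Fin n))))ᶜ),
        b ^ G.edgeSet.ncard * (1 - b) ^ (n.choose 2 - G.edgeSet.ncard)
      = ∑ G ∈ Finset.univ.filter (fun G => ¬(G ∈ A)), wt b (g2f G) := by
    rw [h2]
    exact Finset.sum_congr rfl fun G _ => (wt_g2f b G).symm
  rw [h3]
  have h4 := Finset.sum_filter_add_sum_filter_not (Finset.univ : Finset (SimpleGraph (Fin n)))
    (fun G => G ∈ A) (fun G => wt b (g2f G))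
  have h5 : Finset.univ.filter (fun G : SimpleGraph (Fin n) => G ∈ A) = A := by
    simp [Finset.filter_mem_eq_inter]
  rw [h5, sum_wt_graphs_univ b] at h4
  linarith

lemma tail_up_graphs (b : ℝ) (h0 : 0 ≤ b) (h1 : b ≤ 1) {t : ℝ} (ht : 0 < t) :
    (erMeasure n b {G : SimpleGraph (Fin n) | ¬((G.edgeSet.ncard : ℝ) ≤ t)}).toReal
      ≤ (n.choose 2 : ℝ) * b / t := by
  classical
  rw [erMeasure_apply_toReal b h0 h1]
  have h3 : ∑ G ∈ Finset.univ.filter (· ∈ {G : SimpleGraph (Fin n) | ¬((G.edgeSet.ncard : ℝ) ≤ t)}),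
        b ^ G.edgeSet.ncard * (1 - b) ^ (n.choose 2 - G.edgeSet.ncard)
      = ∑ G ∈ Finset.univ.filter (fun G : SimpleGraph (Fin n) => ¬((G.edgeSet.ncard : ℝ) ≤ t)),
          wt b (g2f G) := by
    refine Finset.sum_congr ?_ fun G _ => (wt_g2f b G).symm
    apply Finset.filter_congr
    intro G _
    simp [Set.mem_setOf_eq]
  rw [h3, sum_transfer (wt b) (fun G : SimpleGraph (Fin n) => ¬((G.edgeSet.ncard : ℝ) ≤ t))]
  have h4 : Finset.univ.filter (fun s : Finset (ES n) => ¬(((f2g s).edgeSet.ncard : ℝ) ≤ t))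
      = Finset.univ.filter (fun s : Finset (ES n) => ¬((s.card : ℝ) ≤ t)) := by
    apply Finset.filter_congr
    intro s _
    rw [← card_g2f, g2f_f2g]
  rw [h4]
  have := tail_up (K := ES n) h0 h1 ht
  rwa [card_ES n] at this

lemma tail_low_graphs (b : ℝ) (h0 : 0 ≤ b) (h1 : b ≤ 1)
    (hN : 0 < (n.choose 2 : ℝ) * b) :
    ∑ G ∈ Finset.univ.filter
        (fun G : SimpleGraph (Fin n) => ((G.edgeSet.ncard : ℝ) < (n.choose 2 : ℝ) * b / 2)),
      wt b (g2f G) ≤ 4 / ((n.choose 2 : ℝ) * b) := by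
  classical
  rw [sum_transfer (wt b)
    (fun G : SimpleGraph (Fin n) => ((G.edgeSet.ncard : ℝ) < (n.choose 2 : ℝ) * b / 2))]
  have h4 : Finset.univ.filter (fun s : Finset (ES n) => (((f2g s).edgeSet.ncard : ℝ) < (n.choose 2 : ℝ) * b / 2))
      = Finset.univ.filter (fun s : Finset (ES n) => ((s.card : ℝ) < (Fintype.card (ES n) : ℝ) * b / 2)) := by
    apply Finset.filter_congr
    intro s _
    rw [← card_g2f, g2f_f2g, card_ES]
  rw [h4, card_ES]
  have := tail_low (K := ES n) h0 h1 (by rwa [card_ES])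
  rwa [card_ES n] at this


end ERAux

namespace ERAux
variable {n : ℕ}

lemma wt_nonneg' {b : ℝ} (h0 : 0 ≤ b) (h1 : b ≤ 1) (G : SimpleGraph (Fin n)) :
    0 ≤ b ^ G.edgeSet.ncard * (1 - b) ^ (n.choose 2 - G.edgeSet.ncard) := by
  rw [← wt_g2f]
  exact wt_nonneg h0 h1 _

lemma erMeasure_compl_toReal' (b : ℝ) (h0 : 0 ≤ b) (h1 : b ≤ 1)
    (A : Finset (SimpleGraph (Fin n))) :
    (erMeasure n b ((↑A : Set (SimpleGraph (Fin n))))ᶜ).toReal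
      = 1 - ∑ G ∈ A, b ^ G.edgeSet.ncard * (1 - b) ^ (n.choose 2 - G.edgeSet.ncard) := by
  rw [erMeasure_compl_toReal b h0 h1 A]
  rw [Finset.sum_congr rfl fun G _ => wt_g2f b G]

lemma tail_low_graphs' (b : ℝ) (h0 : 0 ≤ b) (h1 : b ≤ 1)
    (hN : 0 < (n.choose 2 : ℝ) * b) :
    ∑ G ∈ Finset.univ.filter
        (fun G : SimpleGraph (Fin n) => ((G.edgeSet.ncard : ℝ) < (n.choose 2 : ℝ) * b / 2)),
      b ^ G.edgeSet.ncard * (1 - b) ^ (n.choose 2 - G.edgeSet.ncard)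
      ≤ 4 / ((n.choose 2 : ℝ) * b) := by
  have h := tail_low_graphs b h0 h1 hN
  have e : (Finset.univ.filter
        (fun G : SimpleGraph (Fin n) => ((G.edgeSet.ncard : ℝ) < (n.choose 2 : ℝ) * b / 2))).sum
        (fun G => wt b (g2f G))
      = (Finset.univ.filter
        (fun G : SimpleGraph (Fin n) => ((G.edgeSet.ncard : ℝ) < (n.choose 2 : ℝ) * b / 2))).sum
        (fun G => b ^ G.edgeSet.ncard * (1 - b) ^ (n.choose 2 - G.edgeSet.ncard)) :=
    Finset.sum_congr rfl fun G _ => wt_g2f b G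
  rw [← e]
  exact h

end ERAux

namespace ERAux


lemma ratio_upper {r : ℝ} (hr : 0 < r) {m : ℕ} {t : ℝ} (hmt : (m : ℝ) ≤ t) :
    |r ^ m - 1| ≤ Real.exp (t * |r - 1|) - 1 := by
  have ht0 : 0 ≤ t := le_trans (Nat.cast_nonneg m) hmt
  rcases le_or_gt 1 r with h | h
  · have habs : |r - 1| = r - 1 := abs_of_nonneg (by linarith)
    have hre : r ≤ Real.exp (r - 1) := by
      have := Real.add_one_le_exp (r - 1); linarith
    have h1 : r ^ m ≤ Real.exp ((m : ℝ) * (r - 1)) := by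
      calc r ^ m ≤ Real.exp (r - 1) ^ m := pow_le_pow_left₀ hr.le hre m
        _ = Real.exp ((m : ℝ) * (r - 1)) := (Real.exp_nat_mul _ m).symm
    have h2 : Real.exp ((m : ℝ) * (r - 1)) ≤ Real.exp (t * |r - 1|) := by
      apply Real.exp_le_exp.mpr
      rw [habs]
      exact mul_le_mul_of_nonneg_right hmt (by linarith)
    have h3 : 1 ≤ r ^ m := by
      calc (1:ℝ) = 1 ^ m := (one_pow m).symm
        _ ≤ r ^ m := pow_le_pow_left₀ zero_le_one h m
    rw [abs_of_nonneg (by linarith)]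
    linarith
  · have habs : |r - 1| = 1 - r := by rw [abs_of_neg (by linarith)]; ring
    have hb : 1 + (m : ℝ) * (r - 1) ≤ r ^ m := by
      have := one_add_mul_le_pow (a := r - 1) (by linarith) m
      simpa using this
    have h4 : r ^ m ≤ 1 := pow_le_one₀ hr.le h.le
    have h5 : (m : ℝ) * (1 - r) ≤ t * (1 - r) := mul_le_mul_of_nonneg_right hmt (by linarith)
    have h6 : t * (1 - r) + 1 ≤ Real.exp (t * (1 - r)) := Real.add_one_le_exp _
    rw [abs_of_nonpos (by linarith), habs]
    linarith

lemma ratio_lower {r : ℝ} (hr : 0 < r) {m : ℕ} {c : ℝ} (hc : 0 ≤ c)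
    (hmc : c ≤ (m : ℝ) * |r - 1|) :
    min c (1 - Real.exp (-c)) ≤ |r ^ m - 1| := by
  rcases le_or_gt 1 r with h | h
  · have habs : |r - 1| = r - 1 := abs_of_nonneg (by linarith)
    have hb : 1 + (m : ℝ) * (r - 1) ≤ r ^ m := by
      have := one_add_mul_le_pow (a := r - 1) (by linarith) m
      simpa using this
    rw [habs] at hmc
    rw [abs_of_nonneg (by nlinarith [mul_nonneg (Nat.cast_nonneg m : (0:ℝ) ≤ (m:ℝ)) (by linarith : (0:ℝ) ≤ r - 1)])]
    refine le_trans (min_le_left _ _) ?_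
    linarith
  · have habs : |r - 1| = 1 - r := by rw [abs_of_neg (by linarith)]; ring
    have hre : r ≤ Real.exp (-(1 - r)) := by
      have := Real.add_one_le_exp (-(1 - r)); linarith
    have hrm : r ^ m ≤ Real.exp (-((m : ℝ) * (1 - r))) := by
      calc r ^ m ≤ Real.exp (-(1 - r)) ^ m := pow_le_pow_left₀ hr.le hre m
        _ = Real.exp ((m : ℝ) * -(1 - r)) := (Real.exp_nat_mul _ m).symm
        _ = Real.exp (-((m : ℝ) * (1 - r))) := by ring_nf
    have h2 : Real.exp (-((m : ℝ) * (1 - r))) ≤ Real.exp (-c) := by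
      apply Real.exp_le_exp.mpr
      rw [habs] at hmc
      linarith
    have h4 : r ^ m ≤ 1 := pow_le_one₀ hr.le h.le
    rw [abs_of_nonpos (by linarith)]
    refine le_trans (min_le_right _ _) ?_
    linarith


end ERAux

namespace ERAux
variable {n : ℕ}

lemma iSup_mem_nonneg (A : Finset (SimpleGraph (Fin n)))
    (PX PY : Measure (SimpleGraph (Fin n))) :
    0 ≤ ⨆ G ∈ A, |inclProb PX G / inclProb PY G - 1| :=
  Real.iSup_nonneg fun _ => Real.iSup_nonneg fun _ => abs_nonneg _

lemma iDiv_nonneg (PX PY : Measure (SimpleGraph (Fin n))) : 0 ≤ IDiv PX PY :=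
  le_ciInf fun A => add_nonneg (iSup_mem_nonneg A PX PY) ENNReal.toReal_nonneg

lemma iDiv_le (PX PY : Measure (SimpleGraph (Fin n))) (A : Finset (SimpleGraph (Fin n))) :
    IDiv PX PY ≤ (⨆ G ∈ A, |inclProb PX G / inclProb PY G - 1|) +
      (PY ((↑A : Set (SimpleGraph (Fin n))))ᶜ).toReal := by
  refine ciInf_le ⟨0, ?_⟩ A
  rintro x ⟨B, rfl⟩
  exact add_nonneg (iSup_mem_nonneg B PX PY) ENNReal.toReal_nonneg

lemma choose_two_cast_le_sq (n : ℕ) : ((n.choose 2 : ℕ) : ℝ) ≤ (n : ℝ) ^ 2 := by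
  rw [Nat.cast_choose_two]
  have h : (0:ℝ) ≤ (n:ℝ) := Nat.cast_nonneg n
  nlinarith

lemma sq_le_four_choose_two {n : ℕ} (hn : 2 ≤ n) : (n : ℝ) ^ 2 ≤ 4 * ((n.choose 2 : ℕ) : ℝ) := by
  rw [Nat.cast_choose_two]
  have h : (2:ℝ) ≤ (n:ℝ) := by exact_mod_cast hn
  nlinarith

lemma one_le_choose_two {n : ℕ} (hn : 2 ≤ n) : (1:ℝ) ≤ ((n.choose 2 : ℕ) : ℝ) := by
  have : 1 ≤ n.choose 2 := by
    have := Nat.choose_le_choose 2 hn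
    simpa using this
  exact_mod_cast this

lemma dir1_bound {n : ℕ} (hn : 2 ≤ n) {a b : ℝ}
    (ha : a ∈ Set.Ioc (0:ℝ) (1/2)) (hb : b ∈ Set.Ioc (0:ℝ) (1/2)) :
    IDiv (erMeasure n a) (erMeasure n b)
      ≤ (Real.exp (Real.sqrt ((n.choose 2 : ℝ) * |a - b|)) - 1)
        + (Real.sqrt ((n.choose 2 : ℝ) * |a - b|) + Real.sqrt (((n.choose 2 : ℝ) * b)⁻¹)) := by
  classical
  obtain ⟨ha0, ha1'⟩ := ha
  obtain ⟨hb0, hb1'⟩ := hb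
  have ha1 : a ≤ 1 := by linarith
  have hb1 : b ≤ 1 := by linarith
  set N : ℝ := ((n.choose 2 : ℕ) : ℝ) with hN
  have hN1 : (1:ℝ) ≤ N := one_le_choose_two hn
  set ε : ℝ := N * |a - b| with hε
  set η : ℝ := (N * b)⁻¹ with hη
  have hε0 : 0 ≤ ε := mul_nonneg (by linarith) (abs_nonneg _)
  have hNb : 0 < N * b := mul_pos (by linarith) hb0
  have hη0 : 0 < η := inv_pos.mpr hNb
  set M : ℝ := max ε η with hM
  have hM0 : 0 < M := lt_max_of_lt_right hη0
  have hsM : 0 < Real.sqrt M := Real.sqrt_pos.mpr hM0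
  set t : ℝ := N * b / Real.sqrt M with htdef
  have ht : 0 < t := div_pos hNb hsM
  set A : Finset (SimpleGraph (Fin n)) :=
    Finset.univ.filter (fun G : SimpleGraph (Fin n) => (G.edgeSet.ncard : ℝ) ≤ t) with hA
  have hexp0 : 0 ≤ Real.exp (Real.sqrt ε) - 1 := by
    have h1 := Real.add_one_le_exp (Real.sqrt ε)
    have h2 := Real.sqrt_nonneg ε
    linarith
  have hεM : ε / Real.sqrt M ≤ Real.sqrt ε := by
    rcases eq_or_lt_of_le hε0 with h | h
    · rw [← h]
      simp
    · have hsε : 0 < Real.sqrt ε := Real.sqrt_pos.mpr h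
      have h2 : Real.sqrt ε ≤ Real.sqrt M := Real.sqrt_le_sqrt (le_max_left _ _)
      calc ε / Real.sqrt M ≤ ε / Real.sqrt ε := by gcongr
        _ = Real.sqrt ε := Real.div_sqrt
  have hsup : (⨆ G ∈ A, |inclProb (erMeasure n a) G / inclProb (erMeasure n b) G - 1|)
      ≤ Real.exp (Real.sqrt ε) - 1 := by
    refine Real.iSup_le (fun G => Real.iSup_le (fun hG => ?_) hexp0) hexp0
    have hm : (G.edgeSet.ncard : ℝ) ≤ t := (Finset.mem_filter.mp hG).2
    rw [inclProb_erMeasure a ha0.le ha1, inclProb_erMeasure b hb0.le hb1, ← div_pow]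
    have hr : 0 < a / b := div_pos ha0 hb0
    refine le_trans (ratio_upper hr hm) ?_
    have hd : |a / b - 1| = |a - b| / b := by
      rw [div_sub_one hb0.ne', abs_div, abs_of_pos hb0]
    have htd : t * |a / b - 1| = ε / Real.sqrt M := by
      rw [hd, htdef, hε]
      field_simp
    rw [htd]
    have := Real.exp_le_exp.mpr hεM
    linarith
  have hcompl : ((↑A : Set (SimpleGraph (Fin n))))ᶜ
      = {G : SimpleGraph (Fin n) | ¬((G.edgeSet.ncard : ℝ) ≤ t)} := by
    ext G
    simp [hA]
  have htail : (erMeasure n b ((↑A : Set (SimpleGraph (Fin n))))ᶜ).toReal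
      ≤ Real.sqrt ε + Real.sqrt η := by
    rw [hcompl]
    refine le_trans (tail_up_graphs b hb0.le hb1 ht) ?_
    have heq : N * b / t = Real.sqrt M := by
      rw [htdef]
      field_simp
    rw [heq]
    have hxy : M ≤ (Real.sqrt ε + Real.sqrt η) ^ 2 := by
      have e1 := Real.sq_sqrt hε0
      have e2 := Real.sq_sqrt hη0.le
      have e3 := Real.sqrt_nonneg ε
      have e4 := Real.sqrt_nonneg η
      have e5 : M ≤ ε + η := max_le (le_add_of_nonneg_right hη0.le) (le_add_of_nonneg_left hε0)
      nlinarith [mul_nonneg e3 e4]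
    calc Real.sqrt M ≤ Real.sqrt ((Real.sqrt ε + Real.sqrt η) ^ 2) := Real.sqrt_le_sqrt hxy
      _ = Real.sqrt ε + Real.sqrt η := Real.sqrt_sq (by positivity)
  calc IDiv (erMeasure n a) (erMeasure n b)
      ≤ (⨆ G ∈ A, |inclProb (erMeasure n a) G / inclProb (erMeasure n b) G - 1|) +
        (erMeasure n b ((↑A : Set (SimpleGraph (Fin n))))ᶜ).toReal := iDiv_le _ _ A
    _ ≤ (Real.exp (Real.sqrt ε) - 1) + (Real.sqrt ε + Real.sqrt η) := add_le_add hsup htail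

lemma dir2_bound {n : ℕ} (hn : 2 ≤ n) {a b : ℝ}
    (ha : a ∈ Set.Ioc (0:ℝ) (1/2)) (hb : b ∈ Set.Ioc (0:ℝ) (1/2)) {ε : ℝ} (hε : 0 < ε)
    (hT : ε ≤ (n:ℝ)^2 * |a - b|) (hNb : 16 ≤ (n.choose 2 : ℝ) * b) :
    min (1/4 : ℝ) (min (ε/8) (1 - Real.exp (-(ε/8))))
      ≤ IDiv (erMeasure n a) (erMeasure n b) := by
  classical
  obtain ⟨ha0, ha1'⟩ := ha
  obtain ⟨hb0, hb1'⟩ := hb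
  have ha1 : a ≤ 1 := by linarith
  have hb1 : b ≤ 1 := by linarith
  set δ : ℝ := min (ε/8) (1 - Real.exp (-(ε/8))) with hδdef
  set N : ℝ := ((n.choose 2 : ℕ) : ℝ) with hNdef
  have hN4 : (n:ℝ)^2 ≤ 4 * N := sq_le_four_choose_two hn
  have hNb0 : 0 < N * b := by linarith
  refine le_ciInf fun A => ?_
  have hsupnn := iSup_mem_nonneg A (erMeasure n a) (erMeasure n b)
  by_cases hA : (1/4:ℝ) ≤ (erMeasure n b ((↑A : Set (SimpleGraph (Fin n))))ᶜ).toReal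
  · have := min_le_left (1/4:ℝ) δ
    linarith
  · push_neg at hA
    have hAsum : (3/4:ℝ) ≤ ∑ G ∈ A,
        b ^ G.edgeSet.ncard * (1 - b) ^ (n.choose 2 - G.edgeSet.ncard) := by
      have h := erMeasure_compl_toReal' b hb0.le hb1 A
      rw [h] at hA
      linarith
    have hlow : ∑ G ∈ Finset.univ.filter
          (fun G : SimpleGraph (Fin n) => ((G.edgeSet.ncard : ℝ) < N * b / 2)),
        b ^ G.edgeSet.ncard * (1 - b) ^ (n.choose 2 - G.edgeSet.ncard) ≤ 1/4 := by
      refine le_trans (tail_low_graphs' b hb0.le hb1 hNb0) ?_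
      rw [div_le_iff₀ hNb0]
      linarith
    obtain ⟨G₀, hG₀A, hG₀m⟩ : ∃ G ∈ A, N * b / 2 ≤ (G.edgeSet.ncard : ℝ) := by
      by_contra hno
      push_neg at hno
      have hsub : A ⊆ Finset.univ.filter
          (fun G : SimpleGraph (Fin n) => ((G.edgeSet.ncard : ℝ) < N * b / 2)) := by
        intro G hG
        exact Finset.mem_filter.mpr ⟨Finset.mem_univ _, hno G hG⟩
      have := Finset.sum_le_sum_of_subset_of_nonneg hsub
        (fun G _ _ => wt_nonneg' hb0.le hb1 G)
      linarith
    have hr : 0 < a / b := div_pos ha0 hb0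
    have hd : |a / b - 1| = |a - b| / b := by
      rw [div_sub_one hb0.ne', abs_div, abs_of_pos hb0]
    have hmd : ε/8 ≤ (G₀.edgeSet.ncard : ℝ) * |a / b - 1| := by
      rw [hd]
      have h1 : (N * b / 2) * (|a - b| / b) ≤ (G₀.edgeSet.ncard : ℝ) * (|a - b| / b) :=
        mul_le_mul_of_nonneg_right hG₀m (div_nonneg (abs_nonneg _) hb0.le)
      have h2 : (N * b / 2) * (|a - b| / b) = N * |a - b| / 2 := by
        field_simp
      have h3 : ε / 2 ≤ (n:ℝ)^2 * |a - b| / 2 := by linarith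
      have h4 : (n:ℝ)^2 * |a - b| ≤ 4 * N * |a - b| :=
        mul_le_mul_of_nonneg_right hN4 (abs_nonneg _)
      linarith
    have hδ' : δ ≤ |(a/b) ^ G₀.edgeSet.ncard - 1| :=
      ratio_lower hr (by linarith) hmd
    have hratio : |inclProb (erMeasure n a) G₀ / inclProb (erMeasure n b) G₀ - 1|
        = |(a/b) ^ G₀.edgeSet.ncard - 1| := by
      rw [inclProb_erMeasure a ha0.le ha1, inclProb_erMeasure b hb0.le hb1, ← div_pow]
    have hsup : δ ≤ ⨆ G ∈ A, |inclProb (erMeasure n a) G / inclProb (erMeasure n b) G - 1| := by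
      have hbdd : BddAbove (Set.range fun G : SimpleGraph (Fin n) =>
          ⨆ _ : G ∈ A, |inclProb (erMeasure n a) G / inclProb (erMeasure n b) G - 1|) :=
        Set.Finite.bddAbove (Set.finite_range _)
      calc δ ≤ |inclProb (erMeasure n a) G₀ / inclProb (erMeasure n b) G₀ - 1| := by
            rw [hratio]; exact hδ'
        _ = ⨆ _ : G₀ ∈ A, |inclProb (erMeasure n a) G₀ / inclProb (erMeasure n b) G₀ - 1| :=
            (ciSup_pos (f := fun _ : G₀ ∈ A =>
              |inclProb (erMeasure n a) G₀ / inclProb (erMeasure n b) G₀ - 1|) hG₀A).symm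
        _ ≤ ⨆ G ∈ A, |inclProb (erMeasure n a) G / inclProb (erMeasure n b) G - 1| :=
            le_ciSup hbdd G₀
    have htail0 : (0:ℝ) ≤ (erMeasure n b ((↑A : Set (SimpleGraph (Fin n))))ᶜ).toReal :=
      ENNReal.toReal_nonneg
    have := min_le_right (1/4:ℝ) δ
    linarith



end ERAux

/-- For sequences `p_n, q_n ∈ (0,1/2]` tending to `0` with `n² q_n → ∞`,
the inclusion divergence `I-Div(𝒢(n,p_n) ‖ 𝒢(n,q_n))` tends to `0` iff `n²·|p_n − q_n| → 0`. -/
theorem idiv_erdosRenyi_tendsto_zero_iff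
    (p q : ℕ → ℝ)
    (hp : ∀ n, p n ∈ Set.Ioc (0 : ℝ) (1 / 2)) (hq : ∀ n, q n ∈ Set.Ioc (0 : ℝ) (1 / 2))
    (hp0 : Tendsto p atTop (nhds 0)) (hq0 : Tendsto q atTop (nhds 0))
    (hqinf : Tendsto (fun n : ℕ => (n : ℝ) ^ 2 * q n) atTop atTop) :
    Tendsto (fun n : ℕ => IDiv (erMeasure n (p n)) (erMeasure n (q n))) atTop (nhds 0) ↔
      Tendsto (fun n : ℕ => (n : ℝ) ^ 2 * |p n - q n|) atTop (nhds 0) := by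
  have hNq : Tendsto (fun n : ℕ => ((n.choose 2 : ℕ) : ℝ) * q n) atTop atTop := by
    refine tendsto_atTop_mono' atTop ?_ (hqinf.atTop_div_const (by norm_num : (0:ℝ) < 4))
    filter_upwards [eventually_ge_atTop 2] with n hn
    have h1 : (n:ℝ)^2 ≤ 4 * ((n.choose 2 : ℕ) : ℝ) := ERAux.sq_le_four_choose_two hn
    have hq0' : 0 ≤ q n := (hq n).1.le
    nlinarith
  constructor
  · -- hard direction: IDiv → 0 implies n²|p-q| → 0
    intro hID
    by_contra hnot
    have hfr : ∃ ε > 0, ∃ᶠ n : ℕ in atTop, ε ≤ (n:ℝ)^2 * |p n - q n| := by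
      by_contra h2
      push_neg at h2
      apply hnot
      rw [tendsto_order]
      constructor
      · intro x hx
        exact Eventually.of_forall fun n => lt_of_lt_of_le hx (by positivity)
      · intro x hx
        have h3 := h2 x hx
        filter_upwards [h3] with n hn
        exact hn
    obtain ⟨ε, hεpos, hfr⟩ := hfr
    have hδ : 0 < min (ε/8) (1 - Real.exp (-(ε/8))) := by
      refine lt_min (by linarith) ?_
      have : Real.exp (-(ε/8)) < 1 := Real.exp_lt_one_iff.mpr (by linarith)
      linarith
    have hcpos : 0 < min (1/4:ℝ) (min (ε/8) (1 - Real.exp (-(ε/8)))) :=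
      lt_min (by norm_num) hδ
    have hev1 : ∀ᶠ n in atTop,
        IDiv (erMeasure n (p n)) (erMeasure n (q n))
          < min (1/4:ℝ) (min (ε/8) (1 - Real.exp (-(ε/8)))) :=
      hID.eventually_lt_const hcpos
    have hev2 := hNq.eventually_ge_atTop 16
    obtain ⟨n, hn1, hn2, hn3, hn4⟩ :=
      (hfr.and_eventually (hev1.and (hev2.and (eventually_ge_atTop 2)))).exists
    have hge := ERAux.dir2_bound hn4 (hp n) (hq n) hεpos hn1 hn3
    exact absurd hn2 (not_lt.mpr hge)
  · -- easy direction
    intro hT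
    have hε0 : Tendsto (fun n : ℕ => ((n.choose 2 : ℕ) : ℝ) * |p n - q n|) atTop (𝓝 0) := by
      refine squeeze_zero (fun n => mul_nonneg (Nat.cast_nonneg _) (abs_nonneg _))
        (fun n => mul_le_mul_of_nonneg_right (ERAux.choose_two_cast_le_sq n) (abs_nonneg _)) hT
    have hη0 : Tendsto (fun n : ℕ => (((n.choose 2 : ℕ) : ℝ) * q n)⁻¹) atTop (𝓝 0) :=
      hNq.inv_tendsto_atTop
    have hsε : Tendsto (fun n : ℕ => Real.sqrt (((n.choose 2 : ℕ) : ℝ) * |p n - q n|))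
        atTop (𝓝 0) := by
      have h := (Real.continuous_sqrt.tendsto 0).comp hε0
      simpa only [Function.comp_def, Real.sqrt_zero] using h
    have hsη : Tendsto (fun n : ℕ => Real.sqrt ((((n.choose 2 : ℕ) : ℝ) * q n)⁻¹))
        atTop (𝓝 0) := by
      have h := (Real.continuous_sqrt.tendsto 0).comp hη0
      simpa only [Function.comp_def, Real.sqrt_zero] using h
    have hexp : Tendsto (fun n : ℕ =>
        Real.exp (Real.sqrt (((n.choose 2 : ℕ) : ℝ) * |p n - q n|)) - 1) atTop (𝓝 0) := by
      have h := ((Real.continuous_exp.tendsto 0).comp hsε).sub_const 1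
      simpa only [Function.comp_def, Real.exp_zero, sub_self] using h
    have hB : Tendsto (fun n : ℕ =>
        (Real.exp (Real.sqrt (((n.choose 2 : ℕ) : ℝ) * |p n - q n|)) - 1)
          + (Real.sqrt (((n.choose 2 : ℕ) : ℝ) * |p n - q n|)
            + Real.sqrt ((((n.choose 2 : ℕ) : ℝ) * q n)⁻¹))) atTop (𝓝 0) := by
      have h := hexp.add (hsε.add hsη)
      simpa using h
    refine tendsto_of_tendsto_of_tendsto_of_le_of_le' tendsto_const_nhds hB ?_ ?_
    · exact Eventually.of_forall fun n => ERAux.iDiv_nonneg _ _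
    · filter_upwards [eventually_ge_atTop 2] with n hn
      exact ERAux.dir1_bound hn (hp n) (hq n)

end
end

section
/- Let n ≥ 2, let p, q ∈ (0,1), and set m := C(n,2). Then I-Div(𝒢(n,p) ‖ 𝒢(n,q)) = min over integers g with 0 ≤ g ≤ m of { |(p/q)^g − 1| + Pr[Binom(m,q) > g] }, where Binom(m,q) denotes a binomial random variable with m trials and success probability q. -/
open MeasureTheory Filter Topology Finset
open scoped Classical

noncomputable section

-- weight function
private def wgt (n : ℕ) (p : ℝ) (G : SimpleGraph (Fin n)) : ℝ :=
  p ^ G.edgeSet.ncard * (1 - p) ^ (n.choose 2 - G.edgeSet.ncard)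

private lemma measurableSet_all {n : ℕ} (S : Set (SimpleGraph (Fin n))) : MeasurableSet S :=
  MeasurableSpace.measurableSet_top

private lemma erMeasure_apply' (n : ℕ) (p : ℝ) (S : Set (SimpleGraph (Fin n))) :
    erMeasure n p S = ∑ G ∈ Finset.univ.filter (· ∈ S), ENNReal.ofReal (wgt n p G) := by
  rw [erMeasure, Measure.sum_apply _ (measurableSet_all S), tsum_fintype]
  rw [Finset.sum_filter]
  refine Finset.sum_congr rfl fun G _ => ?_
  rw [Measure.smul_apply, Measure.dirac_apply' _ (measurableSet_all S), smul_eq_mul]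
  by_cases hG : G ∈ S
  · simp [Set.indicator_of_mem hG, hG, wgt]
  · simp [Set.indicator_of_notMem hG, hG]

private lemma erMeasure_ne_top (n : ℕ) (p : ℝ) (S : Set (SimpleGraph (Fin n))) :
    erMeasure n p S ≠ ⊤ := by
  rw [erMeasure_apply']
  exact (ENNReal.sum_lt_top.2 fun _ _ => ENNReal.ofReal_lt_top).ne

private lemma erMeasure_apply (n : ℕ) {p : ℝ} (hp0 : 0 ≤ p) (hp1 : p ≤ 1)
    (S : Set (SimpleGraph (Fin n))) :
    (erMeasure n p S).toReal = ∑ G ∈ Finset.univ.filter (· ∈ S), wgt n p G := by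
  rw [erMeasure_apply', ENNReal.toReal_sum (fun _ _ => ENNReal.ofReal_ne_top)]
  refine Finset.sum_congr rfl fun G _ => ENNReal.toReal_ofReal ?_
  exact mul_nonneg (pow_nonneg hp0 _) (pow_nonneg (by linarith) _)


variable {n : ℕ}

private abbrev K (n : ℕ) : Finset (Sym2 (Fin n)) := (⊤ : SimpleGraph (Fin n)).edgeFinset

private lemma ncard_eq_card (G : SimpleGraph (Fin n)) : G.edgeSet.ncard = G.edgeFinset.card :=
  Set.ncard_eq_toFinset_card' _

private lemma edgeFinset_subset_K (G : SimpleGraph (Fin n)) : G.edgeFinset ⊆ K n :=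
  SimpleGraph.edgeFinset_mono le_top

private lemma card_K (n : ℕ) : (K n).card = n.choose 2 := by
  rw [SimpleGraph.card_edgeFinset_top_eq_card_choose_two, Fintype.card_fin]

private lemma sum_superGraphs (G₀ : SimpleGraph (Fin n)) (f : Finset (Sym2 (Fin n)) → ℝ) :
    ∑ H ∈ Finset.univ.filter (G₀ ≤ ·), f H.edgeFinset
      = ∑ s ∈ ((K n) \ G₀.edgeFinset).powerset, f (G₀.edgeFinset ∪ s) := by
  refine Finset.sum_nbij' (fun H => H.edgeFinset \ G₀.edgeFinset)
    (fun s => SimpleGraph.fromEdgeSet ↑(G₀.edgeFinset ∪ s)) ?_ ?_ ?_ ?_ ?_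
  · intro H hH
    exact Finset.mem_powerset.2 (Finset.sdiff_subset_sdiff (edgeFinset_subset_K H) le_rfl)
  · intro s hs
    rw [Finset.mem_powerset] at hs
    refine Finset.mem_filter.2 ⟨Finset.mem_univ _, ?_⟩
    rw [← SimpleGraph.edgeSet_subset_edgeSet, SimpleGraph.edgeSet_fromEdgeSet]
    intro e he
    exact ⟨Finset.mem_coe.2 (Finset.mem_union_left _ (SimpleGraph.mem_edgeFinset.2 he)),
      SimpleGraph.not_isDiag_of_mem_edgeSet G₀ he⟩
  · intro H hH
    have hle : G₀.edgeFinset ⊆ H.edgeFinset :=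
      SimpleGraph.edgeFinset_subset_edgeFinset.2 (Finset.mem_filter.1 hH).2
    rw [Finset.union_sdiff_of_subset hle, SimpleGraph.coe_edgeFinset,
      SimpleGraph.fromEdgeSet_edgeSet]
  · intro s hs
    rw [Finset.mem_powerset] at hs
    have hdisj : Disjoint G₀.edgeFinset s :=
      (Finset.sdiff_disjoint.mono_left hs).symm
    have hnd : ∀ e ∈ s, ¬ e.IsDiag := fun e he =>
      SimpleGraph.not_isDiag_of_mem_edgeSet ⊤
        (SimpleGraph.mem_edgeFinset.1 (Finset.mem_sdiff.1 (hs he)).1)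
    ext e
    simp only [Finset.mem_sdiff, SimpleGraph.mem_edgeFinset, SimpleGraph.edgeSet_fromEdgeSet,
      Set.mem_diff, Finset.coe_union, Set.mem_union, Finset.mem_coe, Set.mem_setOf_eq]
    constructor
    · rintro ⟨⟨h1 | h1, _⟩, h3⟩
      · exact absurd (SimpleGraph.mem_edgeFinset.2 h1) (fun hh => h3 (SimpleGraph.mem_edgeFinset.1 hh))
      · exact h1
    · intro he
      exact ⟨⟨Or.inr he, hnd e he⟩,
        fun hG => Finset.disjoint_left.1 hdisj (SimpleGraph.mem_edgeFinset.2 hG) he⟩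
  · intro H hH
    have hle : G₀.edgeFinset ⊆ H.edgeFinset :=
      SimpleGraph.edgeFinset_subset_edgeFinset.2 (Finset.mem_filter.1 hH).2
    rw [Finset.union_sdiff_of_subset hle]

private lemma sum_allGraphs (f : Finset (Sym2 (Fin n)) → ℝ) :
    ∑ H : SimpleGraph (Fin n), f H.edgeFinset = ∑ s ∈ (K n).powerset, f s := by
  have h := sum_superGraphs (⊥ : SimpleGraph (Fin n)) f
  have hbot : ∀ (inst : Fintype (⊥ : SimpleGraph (Fin n)).edgeSet),
      @SimpleGraph.edgeFinset (Fin n) ⊥ inst = ∅ := by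
    intro inst
    ext e
    simp [SimpleGraph.mem_edgeFinset]
  rw [hbot _, Finset.sdiff_empty, Finset.filter_true_of_mem (fun H _ => bot_le)] at h
  simp only [Finset.empty_union] at h
  exact h

private lemma sum_powerset_card {α : Type*} (t : Finset α) (f : ℕ → ℝ) :
    ∑ s ∈ t.powerset, f s.card
      = ∑ k ∈ Finset.range (t.card + 1), (t.card.choose k : ℝ) * f k := by
  rw [Finset.sum_powerset_apply_card]
  simp [nsmul_eq_mul]

private lemma sum_powerset_binom {α : Type*} (t : Finset α) (x y : ℝ) :
    ∑ s ∈ t.powerset, x ^ s.card * y ^ (t.card - s.card) = (x + y) ^ t.card := by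
  rw [show (∑ s ∈ t.powerset, x ^ s.card * y ^ (t.card - s.card))
      = ∑ s ∈ t.powerset, (fun k => x ^ k * y ^ (t.card - k)) s.card from rfl,
    sum_powerset_card t (fun k => x ^ k * y ^ (t.card - k)), add_pow]
  exact Finset.sum_congr rfl fun k _ => by ring


private lemma inclProb_erMeasure (n : ℕ) {q : ℝ} (hq0 : 0 < q) (hq1 : q < 1)
    (G : SimpleGraph (Fin n)) :
    inclProb (erMeasure n q) G = q ^ G.edgeFinset.card := by
  have hGK := edgeFinset_subset_K G
  rw [inclProb, erMeasure_apply n hq0.le hq1.le]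
  have hfilter : Finset.univ.filter (· ∈ {H : SimpleGraph (Fin n) | G ≤ H})
      = Finset.univ.filter (G ≤ ·) := by
    apply Finset.filter_congr
    intro H _
    simp [Set.mem_setOf_eq]
  rw [hfilter]
  have hw : ∑ H ∈ Finset.univ.filter (G ≤ ·), wgt n q H
      = ∑ H ∈ Finset.univ.filter (G ≤ ·),
          (fun s : Finset (Sym2 (Fin n)) => q ^ s.card * (1 - q) ^ (n.choose 2 - s.card))
            H.edgeFinset :=
    Finset.sum_congr rfl fun H _ => by rw [wgt, ncard_eq_card]
  rw [hw, sum_superGraphs G (fun s => q ^ s.card * (1 - q) ^ (n.choose 2 - s.card))]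
  have htcard : (K n \ G.edgeFinset).card = n.choose 2 - G.edgeFinset.card := by
    rw [Finset.card_sdiff_of_subset hGK, card_K]
  have hterm : ∀ s ∈ (K n \ G.edgeFinset).powerset,
      q ^ (G.edgeFinset ∪ s).card * (1 - q) ^ (n.choose 2 - (G.edgeFinset ∪ s).card)
        = q ^ G.edgeFinset.card *
            (q ^ s.card * (1 - q) ^ ((K n \ G.edgeFinset).card - s.card)) := by
    intro s hs
    rw [Finset.mem_powerset] at hs
    have hdisj : Disjoint G.edgeFinset s := (Finset.sdiff_disjoint.mono_left hs).symm
    rw [Finset.card_union_of_disjoint hdisj, htcard, Nat.sub_add_eq, pow_add, mul_assoc]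
  rw [Finset.sum_congr rfl hterm, ← Finset.mul_sum,
    sum_powerset_binom (K n \ G.edgeFinset) q (1 - q)]
  have h1 : q + (1 - q) = 1 := by ring
  rw [h1, one_pow, mul_one]

private lemma tail_erMeasure (n : ℕ) {q : ℝ} (hq0 : 0 < q) (hq1 : q < 1) (g : ℕ) :
    (erMeasure n q {H : SimpleGraph (Fin n) | g < H.edgeFinset.card}).toReal =
      ∑ k ∈ Finset.Ioc g (n.choose 2),
        ((n.choose 2).choose k : ℝ) * q ^ k * (1 - q) ^ (n.choose 2 - k) := by
  rw [erMeasure_apply n hq0.le hq1.le, Finset.sum_filter]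
  simp only [Set.mem_setOf_eq]
  trans (∑ H : SimpleGraph (Fin n),
      (fun s : Finset (Sym2 (Fin n)) =>
        (fun k : ℕ => if g < k then q ^ k * (1 - q) ^ (n.choose 2 - k) else 0) s.card)
        H.edgeFinset)
  · refine Finset.sum_congr rfl fun H _ => ?_
    dsimp only
    split_ifs with h
    · simp [wgt, ncard_eq_card]
    · rfl
  rw [sum_allGraphs (fun s : Finset (Sym2 (Fin n)) =>
      (fun k : ℕ => if g < k then q ^ k * (1 - q) ^ (n.choose 2 - k) else 0) s.card),
    sum_powerset_card (K n) (fun k => if g < k then q ^ k * (1 - q) ^ (n.choose 2 - k) else 0),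
    card_K]
  have hsum2 : ∀ k ∈ Finset.range (n.choose 2 + 1),
      ((n.choose 2).choose k : ℝ) * (if g < k then q ^ k * (1 - q) ^ (n.choose 2 - k) else 0)
        = if g < k then ((n.choose 2).choose k : ℝ) * q ^ k * (1 - q) ^ (n.choose 2 - k)
          else 0 := by
    intro k _
    by_cases hk : g < k <;> simp [hk, mul_assoc]
  rw [Finset.sum_congr rfl hsum2, ← Finset.sum_filter]
  apply Finset.sum_congr _ (fun _ _ => rfl)
  ext k
  simp only [Finset.mem_filter, Finset.mem_range, Finset.mem_Ioc, Nat.lt_succ_iff]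
  omega

private lemma erMeasure_univ_toReal (n : ℕ) {q : ℝ} (hq0 : 0 < q) (hq1 : q < 1) :
    (erMeasure n q Set.univ).toReal = 1 := by
  rw [erMeasure_apply n hq0.le hq1.le]
  simp only [Set.mem_univ, Finset.filter_true]
  have hw : ∑ H : SimpleGraph (Fin n), wgt n q H
      = ∑ H : SimpleGraph (Fin n),
          (fun s : Finset (Sym2 (Fin n)) => q ^ s.card * (1 - q) ^ (n.choose 2 - s.card))
            H.edgeFinset :=
    Finset.sum_congr rfl fun H _ => by rw [wgt, ncard_eq_card]
  rw [hw, sum_allGraphs (fun s : Finset (Sym2 (Fin n)) =>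
      q ^ s.card * (1 - q) ^ (n.choose 2 - s.card)), ← card_K n,
    sum_powerset_binom (K n) q (1 - q)]
  have h1 : q + (1 - q) = 1 := by ring
  rw [h1, one_pow]



private lemma abs_pow_sub_one_mono {r : ℝ} (hr : 0 < r) {a b : ℕ} (hab : a ≤ b) :
    |r ^ a - 1| ≤ |r ^ b - 1| := by
  rcases le_or_gt 1 r with h | h
  · have h1 : (1 : ℝ) ≤ r ^ a := one_le_pow₀ h
    have h2 : (1 : ℝ) ≤ r ^ b := one_le_pow₀ h
    have h3 : r ^ a ≤ r ^ b := pow_le_pow_right₀ h hab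
    rw [abs_of_nonneg (by linarith), abs_of_nonneg (by linarith)]
    linarith
  · have h1 : r ^ a ≤ 1 := pow_le_one₀ hr.le h.le
    have h2 : r ^ b ≤ 1 := pow_le_one₀ hr.le h.le
    have h3 : r ^ b ≤ r ^ a := pow_le_pow_of_le_one hr.le h.le hab
    rw [abs_of_nonpos (by linarith), abs_of_nonpos (by linarith)]
    linarith

/-- For `n ≥ 2` and `p, q ∈ (0,1)`, with `m = C(n,2)`,
`I-Div(𝒢(n,p) ‖ 𝒢(n,q)) = min_{0 ≤ g ≤ m} { |(p/q)^g − 1| + Pr[Binom(m,q) > g] }`. -/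
theorem idiv_erdosRenyi_eq_min
    (n : ℕ) (hn : 2 ≤ n) (p q : ℝ)
    (hp : p ∈ Set.Ioo (0 : ℝ) 1) (hq : q ∈ Set.Ioo (0 : ℝ) 1) :
    IDiv (erMeasure n p) (erMeasure n q) =
      ⨅ g : Fin (n.choose 2 + 1),
        (|(p / q) ^ (g : ℕ) - 1| +
          ∑ k ∈ Finset.Ioc (g : ℕ) (n.choose 2),
            ((n.choose 2).choose k : ℝ) * q ^ k * (1 - q) ^ (n.choose 2 - k)) := by
  obtain ⟨hp0, hp1⟩ := hp
  obtain ⟨hq0, hq1⟩ := hq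
  have hr0 : 0 < p / q := div_pos hp0 hq0
  have hincl : ∀ G : SimpleGraph (Fin n),
      |inclProb (erMeasure n p) G / inclProb (erMeasure n q) G - 1|
        = |(p / q) ^ G.edgeFinset.card - 1| := by
    intro G
    rw [inclProb_erMeasure n hp0 hp1 G, inclProb_erMeasure n hq0 hq1 G, ← div_pow]
  have hcard : ∀ G : SimpleGraph (Fin n), G.edgeFinset.card ≤ n.choose 2 := by
    intro G
    have h := SimpleGraph.card_edgeFinset_le_card_choose_two (G := G)
    rwa [Fintype.card_fin] at h
  have htail : ∀ g : ℕ,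
      (erMeasure n q {H : SimpleGraph (Fin n) | g < H.edgeFinset.card}).toReal
        = ∑ k ∈ Finset.Ioc g (n.choose 2),
            ((n.choose 2).choose k : ℝ) * q ^ k * (1 - q) ^ (n.choose 2 - k) :=
    fun g => tail_erMeasure n hq0 hq1 g
  rw [IDiv]
  apply le_antisymm
  · refine le_ciInf fun g => ?_
    set A : Finset (SimpleGraph (Fin n)) :=
      Finset.univ.filter (fun H => H.edgeFinset.card ≤ (g : ℕ)) with hA
    refine le_trans (ciInf_le (Set.Finite.bddBelow (Set.finite_range _)) A)
      (add_le_add ?_ ?_)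
    · refine Real.iSup_le (fun G => Real.iSup_le (fun hG => ?_) (abs_nonneg _)) (abs_nonneg _)
      rw [hincl G]
      exact abs_pow_sub_one_mono hr0 (Finset.mem_filter.1 hG).2
    · have hAc : ((↑A : Set (SimpleGraph (Fin n))))ᶜ
          = {H : SimpleGraph (Fin n) | (g : ℕ) < H.edgeFinset.card} := by
        ext H
        simp [hA, not_le]
      exact le_of_eq (by rw [hAc]; exact htail (g : ℕ))
  · refine le_ciInf fun A => ?_
    rcases A.eq_empty_or_nonempty with hA | hA
    · subst hA
      have hsup : (⨆ G ∈ (∅ : Finset (SimpleGraph (Fin n))),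
          |inclProb (erMeasure n p) G / inclProb (erMeasure n q) G - 1|) = 0 := by
        simp [Real.iSup_of_isEmpty, ciSup_const]
      have hcompl : ((↑(∅ : Finset (SimpleGraph (Fin n))) : Set (SimpleGraph (Fin n))))ᶜ
          = Set.univ := by simp
      rw [hsup, hcompl, erMeasure_univ_toReal n hq0 hq1, zero_add]
      refine le_trans (ciInf_le (Set.Finite.bddBelow (Set.finite_range _))
        (⟨0, Nat.succ_pos _⟩ : Fin (n.choose 2 + 1))) ?_
      have h0 : |(p / q) ^ ((⟨0, Nat.succ_pos _⟩ : Fin (n.choose 2 + 1)) : ℕ) - 1| = 0 := by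
        simp
      rw [h0, zero_add]
      rw [← htail 0, ← erMeasure_univ_toReal n hq0 hq1]
      exact ENNReal.toReal_mono (erMeasure_ne_top n q _) (measure_mono (Set.subset_univ _))
    · obtain ⟨G₀, hG₀, hmax⟩ := Finset.exists_max_image A (fun G => G.edgeFinset.card) hA
      refine le_trans (ciInf_le (Set.Finite.bddBelow (Set.finite_range _))
        (⟨G₀.edgeFinset.card, Nat.lt_succ_of_le (hcard G₀)⟩ : Fin (n.choose 2 + 1)))
        (add_le_add ?_ ?_)
      · show |(p / q) ^ G₀.edgeFinset.card - 1| ≤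
          ⨆ G ∈ A, |inclProb (erMeasure n p) G / inclProb (erMeasure n q) G - 1|
        have hb : BddAbove (Set.range fun G : SimpleGraph (Fin n) =>
            ⨆ _ : G ∈ A, |inclProb (erMeasure n p) G / inclProb (erMeasure n q) G - 1|) :=
          Set.Finite.bddAbove (Set.finite_range _)
        refine le_trans ?_ (le_ciSup hb G₀)
        rw [ciSup_pos hG₀, hincl G₀]
      · refine le_trans (le_of_eq (htail G₀.edgeFinset.card).symm) ?_
        refine ENNReal.toReal_mono (erMeasure_ne_top n q _) (measure_mono ?_)
        intro H hH
        simp only [Set.mem_setOf_eq] at hH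
        simp only [Set.mem_compl_iff, Finset.mem_coe]
        intro hHA
        exact absurd (hmax H hHA) (not_le.2 hH)

end
end

section
/- Let d ≥ 4 be an integer. Then for every t > 0, ∫_t^1 f_d(x) dx ≤ 1 − Φ(t·√(d−3)), where Φ is the standard normal distribution function. Consequently, for every p ∈ (0, 1/2), √(d−3)·t_{p,d} ≤ Φ^{−1}(1−p). -/
open MeasureTheory Filter Topology

noncomputable section

/-- `f_d`, the density of one coordinate of a uniform random point on the sphere
`S^{d-1} ⊆ ℝ^d`. -/
def sphDensity (d : ℕ) (x : ℝ) : ℝ :=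
  Real.Gamma ((d : ℝ) / 2) / (Real.sqrt Real.pi * Real.Gamma (((d : ℝ) - 1) / 2)) *
    max (1 - x ^ 2) 0 ^ (((d : ℝ) - 3) / 2)

/-- The standard normal distribution function `Φ`. -/
def stdNormalCDF (x : ℝ) : ℝ :=
  ∫ t in Set.Iic x, Real.exp (-t ^ 2 / 2) / Real.sqrt (2 * Real.pi)

end

open Set

section Aux

lemma real_beta {a b : ℝ} (ha : 0 < a) (hb : 0 < b) :
    ∫ x in (0:ℝ)..1, x ^ (a-1) * (1-x) ^ (b-1)
      = Real.Gamma a * Real.Gamma b / Real.Gamma (a+b) := by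
  have h := Complex.Gamma_mul_Gamma_eq_betaIntegral (s := (a:ℂ)) (t := (b:ℂ))
    (by simpa using ha) (by simpa using hb)
  have hbeta : Complex.betaIntegral a b
      = ((∫ x in (0:ℝ)..1, x ^ (a-1) * (1-x) ^ (b-1) : ℝ) : ℂ) := by
    rw [Complex.betaIntegral, ← intervalIntegral.integral_ofReal]
    apply intervalIntegral.integral_congr
    intro x hx
    rw [uIcc_of_le (by norm_num : (0:ℝ) ≤ 1)] at hx
    show (x:ℂ) ^ ((a:ℂ)-1) * (1 - (x:ℂ)) ^ ((b:ℂ)-1) = ((x ^ (a-1) * (1-x) ^ (b-1) : ℝ) : ℂ)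
    rw [Complex.ofReal_mul, Complex.ofReal_cpow hx.1, Complex.ofReal_cpow (by linarith [hx.2])]
    push_cast
    ring
  rw [hbeta, ← Complex.ofReal_add, Complex.Gamma_ofReal, Complex.Gamma_ofReal,
    Complex.Gamma_ofReal, ← Complex.ofReal_mul, ← Complex.ofReal_mul] at h
  have h2 := Complex.ofReal_injective h
  have hG : Real.Gamma (a+b) ≠ 0 := (Real.Gamma_pos_of_pos (by linarith)).ne'
  field_simp
  linarith [h2]

lemma integral_one_sub_sq_rpow {m : ℝ} (hm : 0 < m) :
    ∫ x in (0:ℝ)..1, (1 - x^2) ^ m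
      = Real.sqrt Real.pi * Real.Gamma (m+1) / (2 * Real.Gamma (m + 3/2)) := by
  set g : ℝ → ℝ := fun u => u ^ ((1:ℝ)/2 - 1) * (1-u) ^ ((m+1) - 1) with hg
  have hcg : ContinuousOn g (Ioo (0:ℝ) 1) := by
    intro u hu
    apply ContinuousWithinAt.mul
    · exact ((Real.continuousAt_rpow_const u _ (Or.inl hu.1.ne')).continuousWithinAt)
    · exact (((Real.continuousAt_rpow_const (1-u) _ (Or.inl (by linarith [hu.2]))).comp
        (by continuity : Continuous (fun u:ℝ => 1-u)).continuousAt).continuousWithinAt)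
  have hint : IntegrableOn g (Icc (0:ℝ) 1) := by
    have h1 : IntervalIntegrable (fun u : ℝ => u ^ ((1:ℝ)/2 - 1)) volume 0 1 :=
      intervalIntegral.intervalIntegrable_rpow' (by norm_num)
    have h2 : ContinuousOn (fun u : ℝ => (1-u) ^ ((m+1) - 1)) (uIcc (0:ℝ) 1) := by
      intro u _
      exact (((Real.continuousAt_rpow_const (1-u) _ (Or.inr (by linarith)))).comp
        (by continuity : Continuous (fun u:ℝ => 1-u)).continuousAt).continuousWithinAt
    have := h1.mul_continuousOn h2
    rwa [intervalIntegrable_iff_integrableOn_Icc_of_le (by norm_num)] at this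
  have key : (∫ x in (0:ℝ)..1, (2*x) • g (x^2)) = ∫ u in (0:ℝ)..1, g u := by
    have h01 : (0:ℝ) ≤ 1 := by norm_num
    have := intervalIntegral.integral_comp_smul_deriv''' (a := (0:ℝ)) (b := 1)
      (f := fun x => x^2) (f' := fun x => 2*x) (g := g)
      (by fun_prop)
      (fun x _ => ((hasDerivAt_pow 2 x).congr_deriv (by ring)).hasDerivWithinAt)
      (hcg.mono ?img1) (hint.mono_set ?img2) ?intg2
    · simpa using this
    case img1 =>
      rintro _ ⟨x, hx, rfl⟩
      rw [min_eq_left h01, max_eq_right h01] at hx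
      obtain ⟨hx1, hx2⟩ := hx
      show x^2 ∈ Ioo (0:ℝ) 1
      simp only [Set.mem_Ioo]
      constructor <;> nlinarith
    case img2 =>
      rintro _ ⟨x, hx, rfl⟩
      rw [uIcc_of_le h01] at hx
      obtain ⟨hx1, hx2⟩ := hx
      show x^2 ∈ Icc (0:ℝ) 1
      simp only [Set.mem_Icc]
      constructor <;> nlinarith
    case intg2 =>
      have hcont : Continuous (fun x : ℝ => 2 * (1 - x^2) ^ m) := by
        apply Continuous.mul continuous_const
        rw [continuous_iff_continuousAt]
        intro x
        exact (Real.continuousAt_rpow_const _ _ (Or.inr hm.le)).comp (by fun_prop)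
      rw [uIcc_of_le h01]
      apply hcont.integrableOn_Icc.congr_fun_ae
      have h0 : ∀ᵐ (x:ℝ) ∂(volume.restrict (Icc (0:ℝ) 1)), x ≠ 0 := by
        refine ae_restrict_of_ae ?_
        rw [MeasureTheory.ae_iff]
        have hs : {x : ℝ | ¬ x ≠ 0} = {0} := by ext x; simp
        rw [hs]
        exact Real.volume_singleton
      filter_upwards [h0, ae_restrict_mem measurableSet_Icc] with x hx0 hxI
      have hx : 0 < x := lt_of_le_of_ne hxI.1 (Ne.symm hx0)
      show 2 * (1 - x^2) ^ m = (2*x) • g (x^2)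
      rw [hg]
      simp only [smul_eq_mul]
      have h1 : (x^2 : ℝ) ^ ((1:ℝ)/2 - 1) = x⁻¹ := by
        rw [← Real.rpow_natCast x 2, ← Real.rpow_mul hx.le,
          show ((2:ℕ):ℝ) * ((1:ℝ)/2 - 1) = -1 by push_cast; ring, Real.rpow_neg_one]
      rw [h1]
      have h2 : (1 - (x^2:ℝ)) ^ ((m+1) - 1) = (1 - x^2) ^ m := by norm_num
      rw [h2]
      field_simp
  have lhs_eq : (∫ x in (0:ℝ)..1, (2*x) • g (x^2)) = 2 * ∫ x in (0:ℝ)..1, (1 - x^2) ^ m := by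
    rw [← intervalIntegral.integral_const_mul]
    apply intervalIntegral.integral_congr_ae
    filter_upwards with x
    intro hx
    rw [Set.uIoc_of_le (by norm_num : (0:ℝ) ≤ 1)] at hx
    have hx0 : 0 < x := hx.1
    show (2*x) • g (x^2) = 2 * (1 - x^2)^m
    rw [hg]; simp only [smul_eq_mul]
    have h1 : (x^2 : ℝ) ^ ((1:ℝ)/2 - 1) = x⁻¹ := by
      rw [← Real.rpow_natCast x 2, ← Real.rpow_mul hx0.le,
        show ((2:ℕ):ℝ) * ((1:ℝ)/2 - 1) = -1 by push_cast; ring, Real.rpow_neg_one]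
    rw [h1]
    have h2 : (1 - (x^2:ℝ)) ^ ((m+1) - 1) = (1 - x^2) ^ m := by norm_num
    rw [h2]
    field_simp
  have rhs_eq : (∫ u in (0:ℝ)..1, g u)
      = Real.Gamma (1/2) * Real.Gamma (m+1) / Real.Gamma (1/2 + (m+1)) :=
    real_beta (by norm_num) (by linarith)
  have hfin : 2 * ∫ x in (0:ℝ)..1, (1 - x^2) ^ m
      = Real.Gamma (1/2) * Real.Gamma (m+1) / Real.Gamma (1/2 + (m+1)) := by
    rw [← lhs_eq, key, rhs_eq]
  rw [Real.Gamma_one_half_eq] at hfin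
  have h32 : (1:ℝ)/2 + (m+1) = m + 3/2 := by ring
  rw [h32] at hfin
  have hGpos : 0 < Real.Gamma (m + 3/2) := Real.Gamma_pos_of_pos (by linarith)
  rw [eq_div_iff hGpos.ne'] at hfin
  rw [eq_div_iff (by positivity)]
  linarith

lemma phi_fun_eq : (fun x : ℝ => Real.exp (-x ^ 2 / 2) / Real.sqrt (2 * Real.pi))
    = fun x : ℝ => Real.exp (-(1/2) * x ^ 2) * (Real.sqrt (2 * Real.pi))⁻¹ := by
  funext x; rw [div_eq_mul_inv]; ring_nf

lemma phi_integrable :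
    Integrable (fun x : ℝ => Real.exp (-x ^ 2 / 2) / Real.sqrt (2 * Real.pi)) := by
  rw [phi_fun_eq]
  exact (integrable_exp_neg_mul_sq (by norm_num : (0:ℝ) < 1/2)).mul_const _

lemma sqrt_two_pi_pos : 0 < Real.sqrt (2 * Real.pi) := by positivity

lemma phi_total :
    ∫ x : ℝ, Real.exp (-x ^ 2 / 2) / Real.sqrt (2 * Real.pi) = 1 := by
  have h : ∫ x : ℝ, Real.exp (-(1/2) * x ^ 2) = Real.sqrt (Real.pi / (1/2)) :=
    integral_gaussian (1/2)
  have h2 : Real.pi / (1/2 : ℝ) = 2 * Real.pi := by ring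
  rw [h2] at h
  rw [phi_fun_eq, integral_mul_const, h, mul_inv_cancel₀ sqrt_two_pi_pos.ne']

lemma stdNormal_compl (s : ℝ) : 1 - stdNormalCDF s
    = ∫ x in Ioi s, Real.exp (-x ^ 2 / 2) / Real.sqrt (2 * Real.pi) := by
  have := intervalIntegral.integral_Iic_add_Ioi (b := s) (μ := volume) (phi_integrable.integrableOn)
    (phi_integrable.integrableOn)
  rw [phi_total] at this
  rw [stdNormalCDF]
  linarith [this]

lemma stdNormal_zero : stdNormalCDF 0 = 1/2 := by
  have hsym : stdNormalCDF 0
      = ∫ x in Ioi (0:ℝ), Real.exp (-x ^ 2 / 2) / Real.sqrt (2 * Real.pi) := by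
    have := integral_comp_neg_Iic (0:ℝ)
      (fun t => Real.exp (-t ^ 2 / 2) / Real.sqrt (2 * Real.pi))
    rw [neg_zero] at this
    rw [stdNormalCDF, ← this]
    congr 1 with x
    ring_nf
  have h : ∫ x in Ioi (0:ℝ), Real.exp (-(1/2) * x ^ 2) = Real.sqrt (Real.pi / (1/2)) / 2 :=
    integral_gaussian_Ioi (1/2)
  have h2 : Real.pi / (1/2 : ℝ) = 2 * Real.pi := by ring
  rw [h2] at h
  rw [hsym, phi_fun_eq, integral_mul_const, h, div_mul_eq_mul_div,
    mul_inv_cancel₀ sqrt_two_pi_pos.ne']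

lemma stdNormal_strictMono : StrictMono stdNormalCDF := by
  intro a b hab
  have key : stdNormalCDF b - stdNormalCDF a
      = ∫ x in a..b, Real.exp (-x ^ 2 / 2) / Real.sqrt (2 * Real.pi) :=
    intervalIntegral.integral_Iic_sub_Iic phi_integrable.integrableOn phi_integrable.integrableOn
  have hpos : 0 < ∫ x in a..b, Real.exp (-x ^ 2 / 2) / Real.sqrt (2 * Real.pi) := by
    apply intervalIntegral.intervalIntegral_pos_of_pos
      phi_integrable.intervalIntegrable (fun x => by positivity) hab
  linarith [key ▸ hpos]

lemma H_antitone : AntitoneOn (fun u : ℝ => (1 - u) * Real.exp u) (Icc 0 1) := by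
  have hderiv : ∀ u : ℝ, HasDerivAt (fun u : ℝ => (1 - u) * Real.exp u) (-u * Real.exp u) u := by
    intro u
    have h1 : HasDerivAt (fun u : ℝ => 1 - u) (-1) u := by
      simpa using (hasDerivAt_id u).const_sub 1
    have := h1.mul (Real.hasDerivAt_exp u)
    exact this.congr_deriv (by ring)
  apply antitoneOn_of_deriv_nonpos (convex_Icc 0 1)
  · exact Continuous.continuousOn (by fun_prop)
  · exact fun u _ => ((hderiv u).differentiableAt).differentiableWithinAt
  · intro u hu
    rw [interior_Icc] at hu
    rw [(hderiv u).deriv]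
    have : 0 < Real.exp u := Real.exp_pos u
    nlinarith [hu.1]

lemma rpow_decomp {y m : ℝ} (hy0 : 0 ≤ y) (hy1 : y ≤ 1) :
    (1 - y^2) ^ m = ((1 - y^2) * Real.exp (y^2)) ^ m * Real.exp (-m * y^2) := by
  have h1 : (0:ℝ) ≤ 1 - y^2 := by nlinarith
  rw [Real.mul_rpow h1 (Real.exp_pos _).le, Real.rpow_def_of_pos (Real.exp_pos _),
    Real.log_exp, mul_assoc, ← Real.exp_add,
    show y^2 * m + -m * y^2 = 0 by ring, Real.exp_zero, mul_one]

lemma crossing {C K m : ℝ} (hC : 0 ≤ C) (hm : 0 < m) {x s : ℝ}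
    (hx0 : 0 ≤ x) (hxs : x ≤ s) (hs1 : s ≤ 1)
    (h : K * Real.exp (-m * s^2) ≤ C * (1 - s^2) ^ m) :
    K * Real.exp (-m * x^2) ≤ C * (1 - x^2) ^ m := by
  have hs0 : 0 ≤ s := le_trans hx0 hxs
  have hx1 : x ≤ 1 := le_trans hxs hs1
  have hEs : 0 < Real.exp (-m * s^2) := Real.exp_pos _
  have hEx : 0 < Real.exp (-m * x^2) := Real.exp_pos _
  rw [rpow_decomp hs0 hs1] at h
  rw [rpow_decomp hx0 hx1]
  have hK : K ≤ C * ((1 - s^2) * Real.exp (s^2)) ^ m := by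
    have := (mul_le_mul_iff_of_pos_right hEs).mp (by linarith [h] : K * Real.exp (-m * s^2)
      ≤ C * ((1 - s^2) * Real.exp (s^2)) ^ m * Real.exp (-m * s^2))
    exact this
  have hhs0 : (0:ℝ) ≤ (1 - s^2) * Real.exp (s^2) := by
    have : (0:ℝ) ≤ 1 - s^2 := by nlinarith
    positivity
  have hmono : (1 - s^2) * Real.exp (s^2) ≤ (1 - x^2) * Real.exp (x^2) :=
    H_antitone (⟨by positivity, by nlinarith⟩ : x^2 ∈ Icc (0:ℝ) 1)
      (⟨by positivity, by nlinarith⟩ : s^2 ∈ Icc (0:ℝ) 1) (by nlinarith)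
  have hrpow : ((1 - s^2) * Real.exp (s^2)) ^ m ≤ ((1 - x^2) * Real.exp (x^2)) ^ m :=
    Real.rpow_le_rpow hhs0 hmono hm.le
  have : K ≤ C * ((1 - x^2) * Real.exp (x^2)) ^ m :=
    hK.trans (mul_le_mul_of_nonneg_left hrpow hC)
  calc K * Real.exp (-m * x^2) ≤ C * ((1 - x^2) * Real.exp (x^2)) ^ m * Real.exp (-m * x^2) :=
        (mul_le_mul_iff_of_pos_right hEx).mpr this
    _ = _ := by ring

end Aux

noncomputable section

/-- For `d ≥ 4` and `t > 0`, `∫_t^1 f_d ≤ 1 − Φ(t√(d−3))`; consequently,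
for `p ∈ (0,1/2)` and `t_{p,d}` the threshold (characterized by `t_{p,d} ∈ [−1,1]` and
`∫_{t_{p,d}}^1 f_d = p`), we have `√(d−3)·t_{p,d} ≤ Φ⁻¹(1−p)` (i.e. `√(d−3)·t_{p,d} ≤ q` for the
`q` with `Φ(q) = 1 − p`). -/
theorem tail_le_gaussian_tail_and_threshold_bound (d : ℕ) (hd : 4 ≤ d) :
    (∀ t : ℝ, 0 < t →
      (∫ x in t..1, sphDensity d x) ≤ 1 - stdNormalCDF (t * Real.sqrt ((d : ℝ) - 3))) ∧
    ∀ p ∈ Set.Ioo (0 : ℝ) (1 / 2), ∀ t ∈ Set.Icc (-1 : ℝ) 1,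
      (∫ x in t..1, sphDensity d x) = p →
      ∀ q : ℝ, stdNormalCDF q = 1 - p → Real.sqrt ((d : ℝ) - 3) * t ≤ q := by
  have hd3 : (1:ℝ) ≤ (d:ℝ) - 3 := by
    have : (4:ℝ) ≤ (d:ℝ) := by exact_mod_cast hd
    linarith
  set m : ℝ := ((d:ℝ) - 3)/2 with hm_def
  have hm : 0 < m := by rw [hm_def]; linarith
  set C : ℝ := Real.Gamma ((d:ℝ)/2) / (Real.sqrt Real.pi * Real.Gamma (((d:ℝ)-1)/2)) with hC_def
  have hCpos : 0 < C := by
    rw [hC_def]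
    exact div_pos (Real.Gamma_pos_of_pos (by linarith))
      (mul_pos (Real.sqrt_pos.mpr Real.pi_pos) (Real.Gamma_pos_of_pos (by linarith)))
  set c : ℝ := Real.sqrt ((d:ℝ) - 3) with hc_def
  have hcpos : 0 < c := Real.sqrt_pos.mpr (by linarith)
  have hc2 : c^2 = (d:ℝ) - 3 := Real.sq_sqrt (by linarith)
  set K : ℝ := c / Real.sqrt (2*Real.pi) with hK_def
  have hKpos : 0 < K := div_pos hcpos sqrt_two_pi_pos
  set G : ℝ → ℝ := fun x => K * Real.exp (-m * x^2) with hG_def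
  have G_cont : Continuous G := by rw [hG_def]; fun_prop
  have G_nonneg : ∀ x, 0 ≤ G x := fun x => by
    rw [hG_def]; positivity
  have G_integrable : Integrable G := by
    rw [hG_def]; exact (integrable_exp_neg_mul_sq hm).const_mul K
  -- facts about sphDensity
  have f_eq : ∀ x ∈ Icc (-1:ℝ) 1, sphDensity d x = C * (1 - x^2) ^ m := by
    intro x hx
    unfold sphDensity
    rw [max_eq_left (by nlinarith [hx.1, hx.2] : (0:ℝ) ≤ 1 - x^2)]
  have f_cont : Continuous (sphDensity d) := by
    unfold sphDensity
    apply Continuous.mul continuous_const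
    rw [continuous_iff_continuousAt]
    intro x
    exact (Real.continuousAt_rpow_const _ _ (Or.inr (by rw [← hm_def]; exact hm.le))).comp
      (by fun_prop)
  have f_nonneg : ∀ x, 0 ≤ sphDensity d x := by
    intro x
    unfold sphDensity
    rw [← hC_def]
    have : (0:ℝ) ≤ max (1 - x^2) 0 := le_max_right _ _
    positivity
  have f_zero : ∀ x : ℝ, 1 ≤ x → sphDensity d x = 0 := by
    intro x hx
    unfold sphDensity
    rw [max_eq_right (by nlinarith : 1 - x^2 ≤ (0:ℝ)), ← hm_def, Real.zero_rpow hm.ne',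
      mul_zero]
  -- normalization
  have f_half : ∫ x in (0:ℝ)..1, sphDensity d x = 1/2 := by
    have congr1 : ∫ x in (0:ℝ)..1, sphDensity d x = C * ∫ x in (0:ℝ)..1, (1 - x^2)^m := by
      rw [← intervalIntegral.integral_const_mul]
      apply intervalIntegral.integral_congr
      intro x hx
      rw [uIcc_of_le (by norm_num : (0:ℝ) ≤ 1)] at hx
      exact f_eq x ⟨by linarith [hx.1], hx.2⟩
    rw [congr1, integral_one_sub_sq_rpow hm]
    have e1 : m + 1 = ((d:ℝ)-1)/2 := by rw [hm_def]; ring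
    have e2 : m + 3/2 = (d:ℝ)/2 := by rw [hm_def]; ring
    rw [e1, e2, hC_def]
    have g1 : 0 < Real.Gamma (((d:ℝ)-1)/2) := Real.Gamma_pos_of_pos (by linarith)
    have g2 : 0 < Real.Gamma ((d:ℝ)/2) := Real.Gamma_pos_of_pos (by linarith)
    have hπ : 0 < Real.sqrt Real.pi := Real.sqrt_pos.mpr Real.pi_pos
    field_simp
  -- tail identity
  have tail_eq : ∀ t : ℝ, 1 - stdNormalCDF (t * c) = ∫ x in Ioi t, G x := by
    intro t
    rw [stdNormal_compl, mul_comm t c]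
    have h := integral_comp_mul_left_Ioi
      (fun x => Real.exp (-x^2/2) / Real.sqrt (2*Real.pi)) t hcpos
    have h2 : ∫ x in Ioi (c*t), Real.exp (-x^2/2) / Real.sqrt (2*Real.pi)
        = c * ∫ x in Ioi t, Real.exp (-(c*x)^2/2) / Real.sqrt (2*Real.pi) := by
      rw [h, smul_eq_mul, ← mul_assoc, mul_inv_cancel₀ hcpos.ne', one_mul]
    rw [h2, ← integral_const_mul]
    apply setIntegral_congr_fun measurableSet_Ioi
    intro x _
    have harg : -(c*x)^2/2 = -m * x^2 := by
      rw [mul_pow, hc2, hm_def]; ring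
    show c * (Real.exp (-(c*x)^2/2) / Real.sqrt (2*Real.pi)) = K * Real.exp (-m*x^2)
    rw [harg, hK_def]
    ring
  -- half mass of G
  have G_half : ∫ x in Ioi (0:ℝ), G x = 1/2 := by
    rw [hG_def]
    rw [integral_const_mul, integral_gaussian_Ioi m]
    have hsq : Real.sqrt (Real.pi/m) = Real.sqrt (2*Real.pi)/c := by
      rw [show Real.pi/m = (2*Real.pi)/((d:ℝ)-3) by rw [hm_def]; field_simp,
        Real.sqrt_div (by positivity) _, ← hc_def]
    rw [hsq, hK_def]
    field_simp
  -- part 1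
  have part1 : ∀ t : ℝ, 0 < t → (∫ x in t..1, sphDensity d x) ≤ 1 - stdNormalCDF (t * c) := by
    intro t ht
    rw [tail_eq t]
    have G_int : IntegrableOn G (Ioi t) := G_integrable.integrableOn
    by_cases ht1 : t ≤ 1
    · by_cases hcase : ∀ x ∈ Icc t 1, sphDensity d x ≤ G x
      · calc ∫ x in t..1, sphDensity d x ≤ ∫ x in t..1, G x :=
            intervalIntegral.integral_mono_on ht1 (f_cont.intervalIntegrable _ _)
              (G_cont.intervalIntegrable _ _) hcase
          _ = ∫ x in Ioc t 1, G x := intervalIntegral.integral_of_le ht1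
          _ ≤ ∫ x in Ioi t, G x := by
              apply setIntegral_mono_set G_int
              · exact Filter.Eventually.of_forall fun x => G_nonneg x
              · exact HasSubset.Subset.eventuallyLE Ioc_subset_Ioi_self
      · push_neg at hcase
        obtain ⟨s, hsmem, hs⟩ := hcase
        have hle : ∀ x ∈ Icc (0:ℝ) t, G x ≤ sphDensity d x := by
          intro x hx
          have hfs : G s ≤ sphDensity d s := hs.le
          rw [f_eq s ⟨by linarith [hsmem.1], hsmem.2⟩, hG_def] at hfs
          rw [f_eq x ⟨by linarith [hx.1], by linarith [hx.2, hsmem.1, hsmem.2]⟩, hG_def]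
          exact crossing hCpos.le hm hx.1 (le_trans hx.2 hsmem.1) hsmem.2 hfs
        have adj : (∫ x in (0:ℝ)..t, sphDensity d x) + ∫ x in t..1, sphDensity d x
            = ∫ x in (0:ℝ)..1, sphDensity d x :=
          intervalIntegral.integral_add_adjacent_intervals
            (f_cont.intervalIntegrable _ _) (f_cont.intervalIntegrable _ _)
        have h1 : ∫ x in (0:ℝ)..t, G x ≤ ∫ x in (0:ℝ)..t, sphDensity d x :=
          intervalIntegral.integral_mono_on ht.le (G_cont.intervalIntegrable _ _)
            (f_cont.intervalIntegrable _ _) hle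
        have split : ∫ x in Ioi (0:ℝ), G x = (∫ x in Ioc (0:ℝ) t, G x) + ∫ x in Ioi t, G x := by
          rw [← setIntegral_union (Ioc_disjoint_Ioi le_rfl) measurableSet_Ioi
            (G_integrable.integrableOn) (G_integrable.integrableOn),
            Ioc_union_Ioi_eq_Ioi ht.le]
        have hIoc : ∫ x in (0:ℝ)..t, G x = ∫ x in Ioc (0:ℝ) t, G x :=
          intervalIntegral.integral_of_le ht.le
        linarith
    · push_neg at ht1
      have hzero : ∫ x in t..1, sphDensity d x = 0 := by
        rw [intervalIntegral.integral_symm]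
        have hz : ∫ x in (1:ℝ)..t, sphDensity d x = ∫ x in (1:ℝ)..t, (0:ℝ) := by
          apply intervalIntegral.integral_congr
          intro x hx
          rw [uIcc_of_le ht1.le] at hx
          exact f_zero x hx.1
        rw [hz]
        simp
      rw [hzero]
      exact setIntegral_nonneg measurableSet_Ioi (fun x _ => G_nonneg x)
  constructor
  · exact part1
  · intro p hp t htmem hint q hq
    have hq0 : 0 < q := by
      by_contra hcon
      push_neg at hcon
      have hmono := stdNormal_strictMono.monotone hcon
      rw [hq, stdNormal_zero] at hmono
      linarith [hp.2]
    rcases le_or_gt t 0 with h | h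
    · have : c * t ≤ 0 := mul_nonpos_iff.mpr (Or.inl ⟨hcpos.le, h⟩)
      linarith
    · have hle := part1 t h
      rw [hint] at hle
      have h2 : stdNormalCDF (t*c) ≤ stdNormalCDF q := by rw [hq]; linarith
      have h3 := stdNormal_strictMono.le_iff_le.mp h2
      calc c * t = t * c := mul_comm c t
        _ ≤ q := h3
end
end

section
/- Let s > 0, C ≥ 1, and N ≥ 1 be given, and let X₁,…,X_N be i.i.d. real random variables, each having a density f satisfying f(x) ≤ C·e^{−x²/(2s²)}/√(2πs²) for all x ∈ ℝ. Set X* := max_{1 ≤ j ≤ N} |X_j|. Then for every t with 0 ≤ t < 1/s, E[exp(t²·X*²/2)] ≤ exp(t²·s²·log(C·N)) / (1 − t²·s²). -/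
/-!
The density bound gives every coordinate the Gaussian tail `P(|X| > r) ≤ C e^{-r²/(2s²)}`, so by
the union bound `P(exp(t² X*²/2) > u) ≤ CN u^{-1/(t²s²)}`. In the layer-cake formula
`E[Y] = ∫₀^∞ P(Y > u) du` bound the probability by `1` below `a = (CN)^{t²s²}`, where the two
bounds cross, and by the power tail above it: this gives `a + a t²s²/(1 - t²s²) = a/(1 - t²s²)`.
-/

open MeasureTheory Real Set

lemma integral_Ioi_exp_neg_mul_sq_le {b r : ℝ} (hb : 0 < b) (hr : 0 ≤ r) :
    ∫ x in Ioi r, exp (-b * x ^ 2) ≤ exp (-b * r ^ 2) * (√(π / b) / 2) := by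
  have hg : Integrable fun x : ℝ => exp (-b * x ^ 2) := integrable_exp_neg_mul_sq hb
  have hshift : ∫ x in Ioi r, exp (-b * x ^ 2) = ∫ y in Ioi 0, exp (-b * (y + r) ^ 2) := by
    rw [← (measurePreserving_add_right volume r).setIntegral_preimage_emb
      (measurableEmbedding_addRight r)]
    simp
  rw [hshift, ← integral_gaussian_Ioi, ← integral_const_mul]
  refine setIntegral_mono_on (hg.comp_add_right r).integrableOn (hg.const_mul _).integrableOn
    measurableSet_Ioi fun y (hy : 0 < y) => ?_
  rw [← exp_add]
  -- `(y + r)² ≥ y² + r²` for `y, r ≥ 0`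
  exact exp_le_exp.2 (by nlinarith [mul_nonneg hy.le hr])

lemma integral_abs_gt_exp_neg_mul_sq_le {b r : ℝ} (hb : 0 < b) (hr : 0 ≤ r) :
    ∫ x in {x : ℝ | r < |x|}, exp (-b * x ^ 2) ≤ exp (-b * r ^ 2) * √(π / b) := by
  have hg : Integrable fun x : ℝ => exp (-b * x ^ 2) := integrable_exp_neg_mul_sq hb
  have hset : {x : ℝ | r < |x|} = Iio (-r) ∪ Ioi r := by
    ext x; simp [lt_abs, lt_neg, or_comm]
  have hdisj : Disjoint (Iio (-r)) (Ioi r) :=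
    (Iic_disjoint_Ioi (by linarith)).mono_left Iio_subset_Iic_self
  have hneg : ∫ x in Iio (-r), exp (-b * x ^ 2) = ∫ x in Ioi r, exp (-b * x ^ 2) := by
    rw [← integral_Iic_eq_integral_Iio, ← integral_comp_neg_Ioi]
    simp
  rw [hset, setIntegral_union hdisj measurableSet_Ioi hg.integrableOn hg.integrableOn, hneg]
  linarith [integral_Ioi_exp_neg_mul_sq_le hb hr]

lemma withDensity_abs_gt_le {s C r : ℝ} {f : ℝ → ℝ} (hs : 0 < s) (hC : 0 ≤ C)
    (hf : ∀ x, f x ≤ C * exp (-x ^ 2 / (2 * s ^ 2)) / √(2 * π * s ^ 2)) (hr : 0 ≤ r) :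
    volume.withDensity (fun x => ENNReal.ofReal (f x)) {y | r < |y|} ≤
      ENNReal.ofReal (C * exp (-r ^ 2 / (2 * s ^ 2))) := by
  set b := 1 / (2 * s ^ 2)
  have hb : 0 < b := by positivity
  have hπb : π / b = 2 * π * s ^ 2 := by simp only [b]; field_simp
  have hexp : ∀ x : ℝ, exp (-x ^ 2 / (2 * s ^ 2)) = exp (-b * x ^ 2) := fun x => by
    simp only [b]; congr 1; field_simp
  set φ : ℝ → ℝ := fun x => C / √(2 * π * s ^ 2) * exp (-b * x ^ 2)
  have hφ : Integrable φ := (integrable_exp_neg_mul_sq hb).const_mul _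
  have hS : MeasurableSet {y : ℝ | r < |y|} := measurableSet_lt measurable_const measurable_abs
  calc volume.withDensity (fun x => ENNReal.ofReal (f x)) {y | r < |y|}
      ≤ ∫⁻ x in {y | r < |y|}, ENNReal.ofReal (φ x) := by
        rw [withDensity_apply _ hS]
        refine lintegral_mono fun x => ENNReal.ofReal_le_ofReal ((hf x).trans_eq ?_)
        rw [hexp]; ring
    _ = ENNReal.ofReal (C / √(2 * π * s ^ 2) * ∫ x in {y | r < |y|}, exp (-b * x ^ 2)) := by
        rw [← integral_const_mul, ofReal_integral_eq_lintegral_ofReal hφ.integrableOn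
          (.of_forall fun x => by positivity)]
    _ ≤ ENNReal.ofReal (C * exp (-r ^ 2 / (2 * s ^ 2))) := by
        refine ENNReal.ofReal_le_ofReal ?_
        calc C / √(2 * π * s ^ 2) * ∫ x in {y | r < |y|}, exp (-b * x ^ 2)
            ≤ C / √(2 * π * s ^ 2) * (exp (-b * r ^ 2) * √(π / b)) := by
              gcongr; exact integral_abs_gt_exp_neg_mul_sq_le hb hr
          _ = C * exp (-r ^ 2 / (2 * s ^ 2)) := by
              rw [hπb, hexp]; field_simp

lemma withDensity_lt_exp_mul_sq_le {s C t u : ℝ} {f : ℝ → ℝ} (hs : 0 < s) (hC : 0 ≤ C)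
    (hf : ∀ x, f x ≤ C * exp (-x ^ 2 / (2 * s ^ 2)) / √(2 * π * s ^ 2)) (ht : 0 < t)
    (hu : 1 ≤ u) :
    volume.withDensity (fun x => ENNReal.ofReal (f x)) {y | u < exp (t ^ 2 * y ^ 2 / 2)} ≤
      ENNReal.ofReal (C * u ^ (-(t ^ 2 * s ^ 2)⁻¹)) := by
  have hlog : 0 ≤ 2 * log u := by linarith [log_nonneg hu]
  set r := √(2 * log u) / t with hr
  have hsub : {y : ℝ | u < exp (t ^ 2 * y ^ 2 / 2)} ⊆ {y | r < |y|} := fun y (hy : u < _) => by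
    have hlt : 2 * log u < (|y| * t) ^ 2 := by
      rw [mul_pow, sq_abs]
      linarith [(log_lt_iff_lt_exp (by linarith)).2 hy]
    show r < |y|
    rw [hr, div_lt_iff₀ ht, ← sqrt_sq (by positivity : 0 ≤ |y| * t)]
    exact sqrt_lt_sqrt hlog hlt
  have hexp : exp (-r ^ 2 / (2 * s ^ 2)) = u ^ (-(t ^ 2 * s ^ 2)⁻¹) := by
    rw [rpow_def_of_pos (by linarith), hr, div_pow, sq_sqrt hlog]
    congr 1
    field_simp
  calc _ ≤ volume.withDensity (fun x => ENNReal.ofReal (f x)) {y | r < |y|} := measure_mono hsub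
    _ ≤ _ := withDensity_abs_gt_le hs hC hf (by positivity)
    _ = _ := by rw [hexp]

lemma measure_pi_exists_mem_le {ι α : Type*} [Fintype ι] [MeasurableSpace α]
    (ν : Measure α) [IsProbabilityMeasure ν] {S : Set α} (hS : MeasurableSet S) :
    Measure.pi (fun _ : ι => ν) {x | ∃ j, x j ∈ S} ≤ Fintype.card ι * ν S := by
  have hunion : {x : ι → α | ∃ j, x j ∈ S} = ⋃ j, Function.eval j ⁻¹' S := by
    ext; simp
  calc Measure.pi (fun _ : ι => ν) {x | ∃ j, x j ∈ S}
      ≤ ∑ j, Measure.pi (fun _ : ι => ν) (Function.eval j ⁻¹' S) :=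
        hunion ▸ measure_iUnion_fintype_le _ _
    _ = Fintype.card ι * ν S := by
        simp [(measurePreserving_eval (fun _ : ι => ν) _).measure_preimage hS.nullMeasurableSet]

lemma lintegral_Ioi_ofReal_div_rpow {a p : ℝ} (ha : 0 < a) (hp : 1 < p) :
    ∫⁻ u in Ioi a, ENNReal.ofReal ((a / u) ^ p) = ENNReal.ofReal (a / (p - 1)) := by
  have hpow : EqOn (fun u => (a / u) ^ p) (fun u => a ^ p * u ^ (-p)) (Ioi a) :=
    fun u (hu : a < u) => by
      dsimp only
      rw [div_rpow ha.le (ha.trans hu).le, rpow_neg (ha.trans hu).le, div_eq_mul_inv]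
  have hint : IntegrableOn (fun u => (a / u) ^ p) (Ioi a) :=
    IntegrableOn.congr_fun ((integrableOn_Ioi_rpow_of_lt (a := -p) (by linarith) ha).const_mul _)
      hpow.symm measurableSet_Ioi
  rw [← ofReal_integral_eq_lintegral_ofReal hint
    ((ae_restrict_mem measurableSet_Ioi).mono fun u (hu : a < u) => by
      have := ha.trans hu; positivity),
    setIntegral_congr_fun measurableSet_Ioi hpow, integral_const_mul,
    integral_Ioi_rpow_of_lt (by linarith) ha]
  congr 1
  rw [mul_div_assoc', mul_neg, ← rpow_add ha, show p + (-p + 1) = 1 by ring, rpow_one,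
    show -p + 1 = -(p - 1) by ring, neg_div_neg_eq]

lemma lintegral_ofReal_le_of_measure_lt_le_div_rpow {α : Type*} [MeasurableSpace α]
    {μ : Measure α} [IsZeroOrProbabilityMeasure μ] {Y : α → ℝ} (hY : AEMeasurable Y μ)
    (hY0 : 0 ≤ᵐ[μ] Y) {a p : ℝ} (ha : 0 < a) (hp : 1 < p)
    (htail : ∀ u, a < u → μ {x | u < Y x} ≤ ENNReal.ofReal ((a / u) ^ p)) :
    ∫⁻ x, ENNReal.ofReal (Y x) ∂μ ≤ ENNReal.ofReal (a * p / (p - 1)) := by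
  rw [lintegral_eq_lintegral_meas_lt μ hY0 hY, ← Ioc_union_Ioi_eq_Ioi ha.le,
    lintegral_union measurableSet_Ioi (Ioc_disjoint_Ioi le_rfl)]
  have hbody : ∫⁻ u in Ioc 0 a, μ {x | u < Y x} ≤ ENNReal.ofReal a :=
    calc ∫⁻ u in Ioc 0 a, μ {x | u < Y x} ≤ ∫⁻ _ in Ioc 0 a, 1 :=
          lintegral_mono fun _ => prob_le_one
      _ = ENNReal.ofReal a := by simp
  have htail' : ∫⁻ u in Ioi a, μ {x | u < Y x} ≤ ENNReal.ofReal (a / (p - 1)) :=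
    (setLIntegral_mono' measurableSet_Ioi htail).trans_eq (lintegral_Ioi_ofReal_div_rpow ha hp)
  calc _ ≤ ENNReal.ofReal a + ENNReal.ofReal (a / (p - 1)) := add_le_add hbody htail'
    _ = ENNReal.ofReal (a * p / (p - 1)) := by
      have : 0 < p - 1 := by linarith
      rw [← ENNReal.ofReal_add ha.le (by positivity)]
      congr 1
      field_simp
      ring

lemma measure_pi_lt_exp_mul_sq_iSup_abs_le {ι : Type*} [Fintype ι] [Nonempty ι] {s C t u : ℝ}
    {f : ℝ → ℝ} [IsProbabilityMeasure (volume.withDensity fun x => ENNReal.ofReal (f x))]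
    (hs : 0 < s) (hC : 0 ≤ C)
    (hf : ∀ x, f x ≤ C * exp (-x ^ 2 / (2 * s ^ 2)) / √(2 * π * s ^ 2)) (ht : 0 < t)
    (hu : 1 ≤ u) :
    Measure.pi (fun _ : ι => volume.withDensity fun x => ENNReal.ofReal (f x))
        {x | u < exp (t ^ 2 * (⨆ j, |x j|) ^ 2 / 2)} ≤
      Fintype.card ι * ENNReal.ofReal (C * u ^ (-(t ^ 2 * s ^ 2)⁻¹)) := by
  have hsub : {x : ι → ℝ | u < exp (t ^ 2 * (⨆ j, |x j|) ^ 2 / 2)} ⊆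
      {x | ∃ j, x j ∈ {y | u < exp (t ^ 2 * y ^ 2 / 2)}} := fun x (hx : u < _) => by
    obtain ⟨j, hj⟩ := exists_eq_ciSup_of_finite (f := fun j => |x j|)
    exact ⟨j, by rwa [← hj, sq_abs] at hx⟩
  have hS : MeasurableSet {y : ℝ | u < exp (t ^ 2 * y ^ 2 / 2)} :=
    measurableSet_lt measurable_const (by fun_prop)
  calc _ ≤ _ := measure_mono hsub
    _ ≤ _ := measure_pi_exists_mem_le _ hS
    _ ≤ _ := by gcongr; exact withDensity_lt_exp_mul_sq_le hs hC hf ht hu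

theorem subgaussian_max_mgf_bound_general
    (s C : ℝ) (hs : 0 < s) (hC : 1 ≤ C) (N : ℕ) (hN : 1 ≤ N)
    (f : ℝ → ℝ)
    (hf : ∀ x, f x ≤ C * Real.exp (-x ^ 2 / (2 * s ^ 2)) / Real.sqrt (2 * Real.pi * s ^ 2))
    (hprob : IsProbabilityMeasure (volume.withDensity fun x => ENNReal.ofReal (f x)))
    (t : ℝ) (ht0 : 0 ≤ t) (hts : t < 1 / s) :
    ∫⁻ x : Fin N → ℝ,
        ENNReal.ofReal (Real.exp (t ^ 2 * (⨆ j : Fin N, |x j|) ^ 2 / 2))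
      ∂(Measure.pi fun _ : Fin N => volume.withDensity fun x => ENNReal.ofReal (f x)) ≤
      ENNReal.ofReal (Real.exp (t ^ 2 * s ^ 2 * Real.log (C * N)) / (1 - t ^ 2 * s ^ 2)) := by
  have : Nonempty (Fin N) := Fin.pos_iff_nonempty.1 hN
  rcases ht0.eq_or_lt with rfl | ht
  · simp
  set b := t ^ 2 * s ^ 2 with hb
  have hb0 : 0 < b := by positivity
  have hb1 : b < 1 := by
    rw [hb, ← mul_pow]
    exact pow_lt_one₀ (by positivity) ((lt_div_iff₀ hs).1 hts) two_ne_zero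
  have hCN : 1 ≤ C * N := one_le_mul_of_one_le_of_one_le hC (by exact_mod_cast hN)
  have hY : Measurable fun x : Fin N → ℝ => exp (t ^ 2 * (⨆ j, |x j|) ^ 2 / 2) := by
    have := Measurable.iSup (f := fun j (x : Fin N → ℝ) => |x j|) fun j =>
      (measurable_pi_apply j).abs
    fun_prop
  have htail (u : ℝ) (hu : (C * N) ^ b < u) :
      Measure.pi (fun _ : Fin N => volume.withDensity fun x => ENNReal.ofReal (f x))
          {x | u < exp (t ^ 2 * (⨆ j, |x j|) ^ 2 / 2)} ≤
        ENNReal.ofReal (((C * N) ^ b / u) ^ b⁻¹) := by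
    have hu1 : 1 ≤ u := (one_le_rpow hCN hb0.le).trans hu.le
    refine (measure_pi_lt_exp_mul_sq_iSup_abs_le hs (by linarith) hf ht hu1).trans_eq ?_
    rw [Fintype.card_fin, ← ENNReal.ofReal_natCast, ← ENNReal.ofReal_mul (Nat.cast_nonneg _),
      div_rpow (by positivity) (by linarith), rpow_rpow_inv (by linarith) hb0.ne',
      rpow_neg (by linarith), div_eq_mul_inv, mul_assoc, mul_left_comm]
  calc _ ≤ ENNReal.ofReal ((C * N) ^ b * b⁻¹ / (b⁻¹ - 1)) :=
        lintegral_ofReal_le_of_measure_lt_le_div_rpow hY.aemeasurable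
          (.of_forall fun _ => (exp_pos _).le) (by positivity) (one_lt_inv₀ hb0 |>.2 hb1) htail
    _ = _ := by
      rw [rpow_def_of_pos (by linarith), mul_comm (log _)]
      congr 1
      field_simp

/-- **Lemma `subgaussian`.** If `X₁,…,X_N` are i.i.d. with a density `f`
satisfying `f(x) ≤ C e^{−x²/(2s²)}/√(2πs²)`, and `X* = max_j |X_j|`, then for `0 ≤ t < 1/s`,
`E[exp(t² X*²/2)] ≤ exp(t² s² log(CN))/(1 − t² s²)`. -/
theorem subgaussian_max_mgf_bound
    (s C : ℝ) (hs : 0 < s) (hC : 1 ≤ C) (N : ℕ) (hN : 1 ≤ N)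
    (f : ℝ → ℝ) (hf0 : ∀ x, 0 ≤ f x) (hfm : Measurable f)
    (hf : ∀ x, f x ≤ C * Real.exp (-x ^ 2 / (2 * s ^ 2)) / Real.sqrt (2 * Real.pi * s ^ 2))
    (hprob : IsProbabilityMeasure (volume.withDensity fun x => ENNReal.ofReal (f x)))
    (t : ℝ) (ht0 : 0 ≤ t) (hts : t < 1 / s) :
    ∫⁻ x : Fin N → ℝ,
        ENNReal.ofReal (Real.exp (t ^ 2 * (⨆ j : Fin N, |x j|) ^ 2 / 2))
      ∂(Measure.pi fun _ : Fin N => volume.withDensity fun x => ENNReal.ofReal (f x)) ≤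
      ENNReal.ofReal (Real.exp (t ^ 2 * s ^ 2 * Real.log (C * N)) / (1 - t ^ 2 * s ^ 2)) :=
  subgaussian_max_mgf_bound_general s C hs hC N hN f hf hprob t ht0 hts
end
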